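/- arXiv:0707.2914 — 6 statements merged into one kernel-verified Lean document; each statement's English description precedes it below -/
import Mathlib

section
/- If δ = F_1,...,F_m is a shelling of a (not necessarily pure) simplicial complex Δ, then there exists a shelling δ' = F_{i_1},...,F_{i_m} of Δ such that dim F_{i_k} ≥ dim F_{i_{k+1}} for all k, and moreover the restriction sets agree: R_δ(F) = R_{δ'}(F) for every facet F of Δ. (Rearrangement Lemma of Björner and Wachs.) -/
attribute [local instance] Classical.propDecidable

abbrev Mon (n : ℕ) := Fin n →₀ ℕ

def mdeg {n : ℕ} (u : Mon n) : ℕ := u.sum fun _ e => e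

/-- `mcolon u v` is the exponent vector of `u : v = u / gcd(u,v)`. -/
noncomputable def mcolon {n : ℕ} (u v : Mon n) : Mon n := u - v

def IsAdmissible {n : ℕ} (L : List (Mon n)) : Prop :=
  ∀ i (hi : i < L.length), ∀ j (hj : j < i), ∃ k, ∃ hk : k < i,
    mdeg (mcolon (L[k]'(hk.trans hi)) (L[i]'hi)) = 1 ∧
    mcolon (L[k]'(hk.trans hi)) (L[i]'hi) ≤
      mcolon (L[j]'(hj.trans hi)) (L[i]'hi)

def LinearQuotientsSet {n : ℕ} (T : Set (Mon n)) : Prop :=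
  ∃ L : List (Mon n), L.Nodup ∧ IsAdmissible L ∧ {u | u ∈ L} = T

def LinearQuotients {n : ℕ} (G : Finset (Mon n)) : Prop :=
  LinearQuotientsSet (↑G : Set (Mon n))

/-- A (non-pure) shelling in the sense of Björner–Wachs: for each `k ≥ 2` the
intersection of `⟨F_k⟩` with `⟨F_1,…,F_{k-1}⟩` is nonempty and pure of dimension
`dim F_k - 1`. -/
def IsShelling {n : ℕ} (L : List (Finset (Fin n))) : Prop :=
  ∀ k (hk : k < L.length), 0 < k →
    (∃ G : Finset (Fin n), G ⊆ L[k]'hk ∧ G.card + 1 = (L[k]'hk).card ∧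
      ∃ l, ∃ hl : l < k, G ⊆ L[l]'(hl.trans hk)) ∧
    (∀ G : Finset (Fin n), G ⊆ L[k]'hk →
      (∃ l, ∃ hl : l < k, G ⊆ L[l]'(hl.trans hk)) →
      ∃ H : Finset (Fin n), G ⊆ H ∧ H ⊆ L[k]'hk ∧ H.card + 1 = (L[k]'hk).card ∧
        ∃ l, ∃ hl : l < k, H ⊆ L[l]'(hl.trans hk))

/-- The restriction set `R_δ(F) = {i ∈ F : F \ {i} ∈ ⟨F_1,…,F_{k-1}⟩}`, where `F` is the
`k`-th facet in the order `δ` given by the list `L`. -/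
noncomputable def Rset {n : ℕ} (L : List (Finset (Fin n))) (F : Finset (Fin n)) :
    Finset (Fin n) :=
  F.filter fun i => ∃ l, ∃ hl : l < L.idxOf F,
    F.erase i ⊆ L[l]'(hl.trans_le L.idxOf_le_length)

/-!
If `x` immediately precedes `y` in a shelling and `dim x < dim y`, then every face of `y` that
lies in the complex generated by the facets up to `x` already lies in the complex generated by
the facets before `x`: it is contained in a codimension-one face `H` of `y` in that complex, and
`H ⊆ x` would force `H = x ⊆ y`. Consequently, on faces of `x` and of `y`, the complexes
generated by the facets preceding them do not depend on the order of `x` and `y`, so swapping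
the two keeps the shelling and every restriction set. Bubble sort then orders the facets by
decreasing dimension; it terminates because `∑ i, i * |F_i|` drops with every swap.
-/

namespace List

variable {α : Type*}

/-- `indexWeight f l = ∑ i, i * f l[i]`. -/
def indexWeight (f : α → ℕ) : List α → ℕ
  | [] => 0
  | _ :: l => indexWeight f l + (l.map f).sum

theorem indexWeight_append_swap_lt (f : α → ℕ) (A B : List α) {x y : α} (h : f x < f y) :
    indexWeight f (A ++ y :: x :: B) < indexWeight f (A ++ x :: y :: B) := by
  induction A with
  | nil => simp only [nil_append, indexWeight, map_cons, sum_cons]; omega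
  | cons a A ih =>
    simp only [cons_append, indexWeight, map_append, map_cons, sum_append, sum_cons]
    omega

theorem exists_eq_append_cons_cons_of_not_pairwise (f : α → ℕ) {l : List α}
    (h : ¬ l.Pairwise (fun a b => f b ≤ f a)) :
    ∃ A x y B, l = A ++ x :: y :: B ∧ f x < f y := by
  have : Trans (fun a b => f b ≤ f a) (fun a b => f b ≤ f a) (fun a b => f b ≤ f a) :=
    ⟨fun hab hbc => hbc.trans hab⟩
  rw [← isChain_iff_pairwise, isChain_iff_forall_rel_of_append_cons_cons] at h
  push Not at h
  obtain ⟨x, y, A, B, rfl, hxy⟩ := h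
  exact ⟨A, x, y, B, rfl, hxy⟩

theorem exists_pairwise_of_swap_inversion (f : α → ℕ) (P : List α → Prop)
    (hswap : ∀ A x y B, P (A ++ x :: y :: B) → f x < f y → P (A ++ y :: x :: B))
    {l : List α} (hl : P l) : ∃ l', P l' ∧ l'.Pairwise (fun a b => f b ≤ f a) := by
  induction hw : indexWeight f l using Nat.strong_induction_on generalizing l with
  | _ w ih =>
    by_cases hs : l.Pairwise (fun a b => f b ≤ f a)
    · exact ⟨l, hl, hs⟩
    obtain ⟨A, x, y, B, rfl, hxy⟩ := exists_eq_append_cons_cons_of_not_pairwise f hs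
    exact ih _ (hw ▸ indexWeight_append_swap_lt f A B hxy) (hswap A x y B hl hxy) rfl

end List

section Faces

variable {α : Type*}

def faces (P : List (Finset α)) : Set (Finset α) := {G | ∃ F ∈ P, G ⊆ F}

@[simp]
theorem mem_faces {P : List (Finset α)} {G : Finset α} : G ∈ faces P ↔ ∃ F ∈ P, G ⊆ F :=
  Iff.rfl

theorem List.Perm.faces_eq {P Q : List (Finset α)} (h : P.Perm Q) : faces P = faces Q := by
  ext G
  simp only [mem_faces, h.mem_iff]

theorem faces_subset_faces_append (A B : List (Finset α)) : faces A ⊆ faces (A ++ B) :=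
  fun _ ⟨F, hF, hGF⟩ => ⟨F, List.mem_append_left B hF, hGF⟩

/-- `⟨F⟩ ∩ K` is nonempty and pure of dimension `dim F - 1`. -/
def ShellsOnto (K : Set (Finset α)) (F : Finset α) : Prop :=
  (∃ G ⊆ F, G.card + 1 = F.card ∧ G ∈ K) ∧
    ∀ G ⊆ F, G ∈ K → ∃ H, G ⊆ H ∧ H ⊆ F ∧ H.card + 1 = F.card ∧ H ∈ K

theorem ShellsOnto.congr {K K' : Set (Finset α)} {F : Finset α}
    (h : ∀ G ⊆ F, G ∈ K ↔ G ∈ K') (hK : ShellsOnto K F) : ShellsOnto K' F := by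
  obtain ⟨⟨G, hGF, hcard, hGK⟩, hpure⟩ := hK
  refine ⟨⟨G, hGF, hcard, (h G hGF).1 hGK⟩, fun G hGF hGK' => ?_⟩
  obtain ⟨H, hGH, hHF, hcard, hHK⟩ := hpure G hGF ((h G hGF).2 hGK')
  exact ⟨H, hGH, hHF, hcard, (h H hHF).1 hHK⟩

theorem ShellsOnto.ne_nil {A : List (Finset α)} {F : Finset α} (h : ShellsOnto (faces A) F) :
    A ≠ [] := by
  rintro rfl
  obtain ⟨_, _, _, _, hF, _⟩ := h.1
  simp at hF

/-- The only face of `y` that `x` could contribute at codimension one is `x` itself. -/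
theorem ShellsOnto.mem_faces_append_singleton_iff {A : List (Finset α)} {x y G : Finset α}
    (hy : ShellsOnto (faces (A ++ [x])) y) (hcard : x.card < y.card) (hxy : ¬ x ⊆ y)
    (hGy : G ⊆ y) : G ∈ faces (A ++ [x]) ↔ G ∈ faces A := by
  refine ⟨fun hG => ?_, fun hG => faces_subset_faces_append A [x] hG⟩
  obtain ⟨H, hGH, hHy, hHcard, F, hF, hHF⟩ := hy.2 G hGy hG
  rcases List.mem_append.mp hF with hFA | hFx
  · exact ⟨F, hFA, hGH.trans hHF⟩
  · obtain rfl : F = x := by simpa using hFx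
    obtain rfl : H = F := Finset.eq_of_subset_of_card_le hHF (by omega)
    exact absurd hHy hxy

theorem ShellsOnto.mem_faces_append_singleton_swap_iff {A : List (Finset α)} {x y G : Finset α}
    (hy : ShellsOnto (faces (A ++ [x])) y) (hcard : x.card < y.card) (hxy : ¬ x ⊆ y)
    (hGx : G ⊆ x) : G ∈ faces (A ++ [y]) ↔ G ∈ faces A := by
  refine ⟨fun ⟨F, hF, hGF⟩ => ?_, fun hG => faces_subset_faces_append A [y] hG⟩
  rcases List.mem_append.mp hF with hFA | hFy
  · exact ⟨F, hFA, hGF⟩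
  · obtain rfl : F = y := by simpa using hFy
    exact (hy.mem_faces_append_singleton_iff hcard hxy hGF).1 ⟨x, by simp, hGx⟩

end Faces

section Shelling

variable {n : ℕ}

theorem mem_faces_take (L : List (Finset (Fin n))) {k : ℕ} (hk : k ≤ L.length)
    (G : Finset (Fin n)) :
    G ∈ faces (L.take k) ↔ ∃ l, ∃ hl : l < k, G ⊆ L[l]'(hl.trans_le hk) := by
  simp only [mem_faces, List.mem_iff_getElem, List.length_take, List.getElem_take]
  constructor
  · rintro ⟨_, ⟨l, hl, rfl⟩, hG⟩
    exact ⟨l, by omega, hG⟩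
  · rintro ⟨l, hl, hG⟩
    exact ⟨_, ⟨l, by omega, rfl⟩, hG⟩

/-- The complex `Δ_{k-1}` generated by the facets preceding `F = F_k` in `L`. -/
noncomputable def facesBefore (L : List (Finset (Fin n))) (F : Finset (Fin n)) :
    Set (Finset (Fin n)) :=
  faces (L.take (L.idxOf F))

theorem isShelling_iff_forall_getElem (L : List (Finset (Fin n))) :
    IsShelling L ↔ ∀ k (hk : k < L.length), 0 < k → ShellsOnto (faces (L.take k)) L[k] := by
  refine forall_congr' fun k => forall_congr' fun hk => imp_congr_right fun _ => ?_
  simp only [ShellsOnto, mem_faces_take L hk.le]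

theorem isShelling_iff {L : List (Finset (Fin n))} (hnd : L.Nodup) :
    IsShelling L ↔ ∀ F ∈ L, 0 < L.idxOf F → ShellsOnto (facesBefore L F) F := by
  rw [isShelling_iff_forall_getElem]
  constructor
  · intro h F hF hpos
    have hk := List.idxOf_lt_length_iff.mpr hF
    simpa only [facesBefore, List.getElem_idxOf hk] using h _ hk hpos
  · intro h k hk hpos
    have hidx := hnd.idxOf_getElem k hk
    simpa only [facesBefore, hidx] using h L[k] (L.getElem_mem hk) (hidx ▸ hpos)

theorem Rset_eq_filter (L : List (Finset (Fin n))) (F : Finset (Fin n)) :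
    Rset L F = F.filter fun i => F.erase i ∈ facesBefore L F := by
  simp only [Rset, facesBefore, mem_faces_take L L.idxOf_le_length]

theorem Rset_congr {L L' : List (Finset (Fin n))} {F : Finset (Fin n)}
    (h : ∀ G ⊆ F, G ∈ facesBefore L F ↔ G ∈ facesBefore L' F) : Rset L F = Rset L' F := by
  rw [Rset_eq_filter, Rset_eq_filter]
  exact Finset.filter_congr fun i _ => h _ (F.erase_subset i)

variable {A B : List (Finset (Fin n))} {x y F : Finset (Fin n)}

theorem idxOf_append_cons_self (h : F ∉ A) : (A ++ F :: B).idxOf F = A.length := by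
  simp [List.idxOf_append_of_notMem h]

theorem facesBefore_append_cons_self (h : F ∉ A) : facesBefore (A ++ F :: B) F = faces A := by
  simp [facesBefore, idxOf_append_cons_self h]

theorem facesBefore_append_cons_cons_snd (hy : y ∉ A) (hxy : x ≠ y) :
    facesBefore (A ++ x :: y :: B) y = faces (A ++ [x]) := by
  rw [List.append_cons, facesBefore_append_cons_self (by simp [hy, hxy.symm])]

theorem idxOf_append_swap (hx : F ≠ x) (hy : F ≠ y) :
    (A ++ y :: x :: B).idxOf F = (A ++ x :: y :: B).idxOf F := by
  by_cases hA : F ∈ A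
  · simp only [List.idxOf_append_of_mem hA]
  · simp [List.idxOf_append_of_notMem hA, List.idxOf_cons_ne _ hx.symm,
      List.idxOf_cons_ne _ hy.symm]

theorem facesBefore_append_swap (hx : F ≠ x) (hy : F ≠ y) :
    facesBefore (A ++ y :: x :: B) F = facesBefore (A ++ x :: y :: B) F := by
  by_cases hA : F ∈ A
  · simp only [facesBefore, List.idxOf_append_of_mem hA,
      List.take_append_of_le_length List.idxOf_le_length]
  · simp only [facesBefore, List.idxOf_append_of_notMem hA, List.take_length_add_append,
      List.idxOf_cons_ne _ hx.symm, List.idxOf_cons_ne _ hy.symm, List.take_succ_cons]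
    exact ((List.Perm.swap x y _).append_left A).faces_eq

theorem IsShelling.shellsOnto_of_append_cons (hnd : (A ++ F :: B).Nodup)
    (h : IsShelling (A ++ F :: B)) (hA : A ≠ []) : ShellsOnto (faces A) F := by
  have hFA : F ∉ A := fun hF => (List.nodup_middle.mp hnd).notMem (List.mem_append_left B hF)
  rw [← facesBefore_append_cons_self (B := B) hFA]
  refine (isShelling_iff hnd).mp h F (by simp) ?_
  rw [idxOf_append_cons_self hFA]
  exact List.length_pos_iff.mpr hA

theorem IsShelling.shellsOnto_append_singleton (hnd : (A ++ x :: y :: B).Nodup)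
    (h : IsShelling (A ++ x :: y :: B)) : ShellsOnto (faces (A ++ [x])) y := by
  rw [List.append_cons] at hnd h
  exact h.shellsOnto_of_append_cons hnd (by simp)

theorem IsShelling.swap (hnd : (A ++ x :: y :: B).Nodup) (hxy : ¬ x ⊆ y)
    (hcard : x.card < y.card) (h : IsShelling (A ++ x :: y :: B)) :
    IsShelling (A ++ y :: x :: B) := by
  obtain ⟨hxA, hyA, hne⟩ : x ∉ A ∧ y ∉ A ∧ x ≠ y := by
    grind [List.nodup_append, List.nodup_cons]
  have hy := h.shellsOnto_append_singleton hnd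
  have hy_shell : ShellsOnto (faces A) y :=
    hy.congr fun _ hG => hy.mem_faces_append_singleton_iff hcard hxy hG
  have hx_shell : ShellsOnto (faces (A ++ [y])) x :=
    (h.shellsOnto_of_append_cons hnd hy_shell.ne_nil).congr fun _ hG =>
      (hy.mem_faces_append_singleton_swap_iff hcard hxy hG).symm
  have hperm := (List.Perm.swap x y B).append_left A
  rw [isShelling_iff (hperm.nodup_iff.mpr hnd)]
  intro F hF hpos
  by_cases hFy : F = y
  · rw [hFy, facesBefore_append_cons_self hyA]
    exact hy_shell
  by_cases hFx : F = x
  · rw [hFx, facesBefore_append_cons_cons_snd hxA hne.symm]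
    exact hx_shell
  rw [facesBefore_append_swap hFx hFy]
  exact (isShelling_iff hnd).mp h F (hperm.mem_iff.mp hF) (idxOf_append_swap hFx hFy ▸ hpos)

theorem Rset_append_swap (hnd : (A ++ x :: y :: B).Nodup) (hxy : ¬ x ⊆ y)
    (hcard : x.card < y.card) (h : IsShelling (A ++ x :: y :: B)) :
    Rset (A ++ y :: x :: B) = Rset (A ++ x :: y :: B) := by
  have hy := h.shellsOnto_append_singleton hnd
  obtain ⟨hxA, hyA, hne⟩ : x ∉ A ∧ y ∉ A ∧ x ≠ y := by
    grind [List.nodup_append, List.nodup_cons]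
  funext F
  apply Rset_congr
  by_cases hFy : F = y
  · rw [hFy, facesBefore_append_cons_self hyA, facesBefore_append_cons_cons_snd hyA hne]
    exact fun G hG => (hy.mem_faces_append_singleton_iff hcard hxy hG).symm
  by_cases hFx : F = x
  · rw [hFx, facesBefore_append_cons_cons_snd hxA hne.symm, facesBefore_append_cons_self hxA]
    exact fun G hG => hy.mem_faces_append_singleton_swap_iff hcard hxy hG
  rw [facesBefore_append_swap hFx hFy]
  exact fun _ _ => Iff.rfl

end Shelling

/-- Rearrangement Lemma of Björner and Wachs: any shelling of a simplicial complex
(given by the list of its facets, an antichain) can be rearranged into a shelling in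
which the dimensions of the facets are weakly decreasing, without changing the
restriction sets. -/
theorem shelling_rearrangement {n : ℕ} (L : List (Finset (Fin n))) (hnd : L.Nodup)
    (hanti : ∀ F ∈ L, ∀ G ∈ L, F ⊆ G → F = G) (h : IsShelling L) :
    ∃ L' : List (Finset (Fin n)), L'.Perm L ∧ IsShelling L' ∧
      L'.Pairwise (fun F G => G.card ≤ F.card) ∧
      ∀ F ∈ L, Rset L F = Rset L' F := by
  set P : List (Finset (Fin n)) → Prop :=
    fun L' => L'.Perm L ∧ IsShelling L' ∧ Rset L' = Rset L
  have hswap : ∀ A x y B, P (A ++ x :: y :: B) → x.card < y.card → P (A ++ y :: x :: B) := by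
    rintro A x y B ⟨hperm, hshell, hR⟩ hcard
    have hnd' := hperm.nodup_iff.mpr hnd
    have hxy : ¬ x ⊆ y := fun hsub => hcard.ne <| congrArg Finset.card <|
      hanti x (hperm.subset (by simp)) y (hperm.subset (by simp)) hsub
    exact ⟨((List.Perm.swap x y B).append_left A).trans hperm, hshell.swap hnd' hxy hcard,
      (Rset_append_swap hnd' hxy hcard hshell).trans hR⟩
  obtain ⟨L', ⟨hperm, hshell, hR⟩, hsorted⟩ :=
    List.exists_pairwise_of_swap_inversion Finset.card P hswap ⟨List.Perm.refl L, h, rfl⟩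
  exact ⟨L', hperm, hshell, hsorted, fun F _ => congrFun hR.symm F⟩
end

section
/- If a monomial ideal I ⊂ S has linear quotients, then its squarefree part I* — the ideal generated by the squarefree monomials in the minimal generating set of I — also has linear quotients. Moreover, the restriction of an admissible order of G(I) to the squarefree generators is an admissible order of G(I*). -/
attribute [local instance] Classical.propDecidable

/-- A monomial is squarefree if every variable occurs with exponent at most one. -/
def IsSqfree {n : ℕ} (u : Mon n) : Prop := ∀ i, u i ≤ 1

/-! If `w : u` divides `v : u`, then `w` divides `lcm(u, v)`. Hence, when `u` and `v` are
squarefree, the earlier generator `w` for which `w : u` is a variable dividing `v : u` is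
squarefree too, so it survives the restriction of the order to the squarefree generators. -/

/-- The colon ideal `(pre) : u` is generated by variables. -/
def LinearColon {n : ℕ} (pre : List (Mon n)) (u : Mon n) : Prop :=
  ∀ v ∈ pre, ∃ w ∈ pre, mdeg (mcolon w u) = 1 ∧ mcolon w u ≤ mcolon v u

theorem isAdmissible_iff_linearColon {n : ℕ} {L : List (Mon n)} :
    IsAdmissible L ↔ ∀ pre u suf, L = pre ++ u :: suf → LinearColon pre u := by
  constructor
  · rintro hadm pre u suf rfl v hv
    obtain ⟨j, hj, rfl⟩ := List.mem_iff_getElem.mp hv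
    obtain ⟨k, hk, hdeg, hle⟩ := hadm pre.length (by simp) j hj
    refine ⟨pre[k], List.getElem_mem hk, ?_⟩
    simpa [List.getElem_append_left hk, List.getElem_append_left hj] using And.intro hdeg hle
  · intro hcolon i hi j hj
    have hsplit : L = L.take i ++ L[i] :: L.drop (i + 1) := by
      rw [← List.drop_eq_getElem_cons hi, List.take_append_drop]
    obtain ⟨w, hw, hdeg, hle⟩ :=
      hcolon _ _ _ hsplit L[j] (List.mem_take_iff_getElem.mpr ⟨j, by omega, rfl⟩)
    obtain ⟨k, hk, rfl⟩ := List.mem_take_iff_getElem.mp hw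
    exact ⟨k, by omega, hdeg, hle⟩

theorem LinearColon.filter {n : ℕ} {p : Mon n → Bool}
    (hp : ∀ u v w, p u → p v → mcolon w u ≤ mcolon v u → p w)
    {pre : List (Mon n)} {u : Mon n} (hcolon : LinearColon pre u) (hu : p u) :
    LinearColon (pre.filter p) u := by
  intro v hv
  rw [List.mem_filter] at hv
  obtain ⟨w, hw, hdeg, hle⟩ := hcolon v hv.1
  exact ⟨w, List.mem_filter.mpr ⟨hw, hp u v w hu hv.2 hle⟩, hdeg, hle⟩

theorem IsAdmissible.filter {n : ℕ} {p : Mon n → Bool}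
    (hp : ∀ u v w, p u → p v → mcolon w u ≤ mcolon v u → p w)
    {L : List (Mon n)} (hadm : IsAdmissible L) : IsAdmissible (L.filter p) := by
  rw [isAdmissible_iff_linearColon] at hadm ⊢
  intro pre u suf hsplit
  obtain ⟨l₁, l₂, rfl, rfl, hl₂⟩ := List.filter_eq_append_iff.mp hsplit
  obtain ⟨m₁, m₂, rfl, hm₁, hu, -⟩ := List.filter_eq_cons_iff.mp hl₂
  have hcolon := (hadm (l₁ ++ m₁) u m₂ (by simp)).filter hp hu
  rwa [List.filter_append, List.filter_eq_nil_iff.mpr hm₁, List.append_nil] at hcolon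

theorem apply_le_max_of_mcolon_le {n : ℕ} {u v w : Mon n} (h : mcolon w u ≤ mcolon v u)
    (s : Fin n) : w s ≤ max (v s) (u s) := by
  rw [← tsub_add_eq_max, ← tsub_le_iff_right]
  exact h s

theorem IsSqfree.of_mcolon_le {n : ℕ} {u v w : Mon n} (hu : IsSqfree u) (hv : IsSqfree v)
    (h : mcolon w u ≤ mcolon v u) : IsSqfree w := fun s =>
  (apply_le_max_of_mcolon_le h s).trans (max_le (hv s) (hu s))

/-- If a monomial ideal `I` has linear quotients, then its squarefree part `I*` has
linear quotients; moreover the restriction of any admissible order of `G(I)` to the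
squarefree generators is an admissible order of `G(I*)`. -/
theorem squarefree_part_linearQuotients {n : ℕ} (G : Finset (Mon n))
    (h : LinearQuotients G) :
    LinearQuotientsSet {u | u ∈ G ∧ IsSqfree u} ∧
    ∀ L : List (Mon n), L.Nodup → IsAdmissible L → {u | u ∈ L} = (↑G : Set (Mon n)) →
      IsAdmissible (L.filter fun u => decide (IsSqfree u)) := by
  have hfilter : ∀ L : List (Mon n), IsAdmissible L →
      IsAdmissible (L.filter fun u => decide (IsSqfree u)) := fun L hadm =>
    hadm.filter fun u v w hu hv hle => by
      simp only [decide_eq_true_eq] at hu hv ⊢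
      exact hu.of_mcolon_le hv hle
  refine ⟨?_, fun L _ hadm _ => hfilter L hadm⟩
  obtain ⟨L, hnd, hadm, hL⟩ := h
  refine ⟨_, hnd.filter _, hfilter L hadm, ?_⟩
  ext u
  simp [← Finset.mem_coe, ← hL]
end

section
/- If Γ is a shellable simplicial complex of dimension d, then the i-th facet skeleton Γ^[i] is shellable for every i ≤ d. In particular, if Γ is pure, every skeleton of Γ is shellable. -/
attribute [local instance] Classical.propDecidable

/-- A simplicial complex, given by the finite antichain of its facets, is shellable if
its facets admit a shelling order. -/
def Shellable {n : ℕ} (Δ : Finset (Finset (Fin n))) : Prop :=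
  ∃ L : List (Finset (Fin n)), L.Nodup ∧ L.toFinset = Δ ∧ IsShelling L

/-- The `1`-facet skeleton of the simplicial complex with facet set `Δ`: its facets
are the maximal sets among all `G ⊆ F`, `F` a facet, with `|G| = |F| - 1`. -/
noncomputable def facetSkeleton {n : ℕ} (Δ : Finset (Finset (Fin n))) :
    Finset (Finset (Fin n)) :=
  letI T := Δ.biUnion fun F => F.powerset.filter fun G => G.card + 1 = F.card
  T.filter fun G => ∀ H ∈ T, G ⊆ H → G = H


/-!
By the rearrangement lemma of Björner–Wachs a shelling `F₁, …, F_t` may be assumed to list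
the facets by weakly decreasing size: an adjacent pair with `|F_k| < |F_{k+1}|` can be swapped
without destroying the shelling property, and bubble sort terminates. For such an order, list the
facets of the `1`-facet skeleton block by block, the `k`-th block consisting of the skeleton
facets contained in `F_k` but in no earlier `F_j`. Two faces of the same block meet in
codimension one. For `G` in block `k` and a face inside an earlier `F_j`, the shelling gives a
codimension-one face `H = F_i ∩ F_k` (`i < k`) of `F_k` containing `F_j ∩ F_k`; `G` and `H`
span `F_k`, so a skeleton facet containing `H` does not contain `G` and meets it in codimension
one, and it is listed earlier since it lies in `F_i` or in a facet larger than `F_k`.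
-/

open Finset

section Sorting

variable {α β : Type*} [LinearOrder β] (f : α → β)

noncomputable def inversions : List α → ℕ
  | [] => 0
  | a :: l => l.countP (fun b => f a < f b) + inversions l

lemma inversions_swap_lt {a b : α} (hab : f a < f b) (X Y : List α) :
    inversions f (X ++ b :: a :: Y) < inversions f (X ++ a :: b :: Y) := by
  induction X with
  | nil =>
    simp [inversions, hab, not_lt.2 hab.le]
    omega
  | cons c X ih =>
    have hperm : (X ++ b :: a :: Y).Perm (X ++ a :: b :: Y) := .append_left X (.swap a b Y)
    simp only [List.cons_append, inversions, hperm.countP_eq]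
    omega

lemma exists_adjacent_lt_of_not_pairwise {l : List α}
    (h : ¬ l.Pairwise fun a b => f b ≤ f a) :
    ∃ X a b Y, l = X ++ a :: b :: Y ∧ f a < f b := by
  induction l with
  | nil => exact absurd .nil h
  | cons c l ih =>
    by_cases hl : l.Pairwise fun a b => f b ≤ f a
    · obtain ⟨b, hb, hcb⟩ : ∃ b ∈ l, f c < f b := by
        simpa [List.pairwise_cons, hl] using h
      obtain _ | ⟨d, l⟩ := l
      · simp at hb
      refine ⟨[], c, d, l, rfl, ?_⟩
      rcases List.mem_cons.1 hb with rfl | hb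
      · exact hcb
      · exact hcb.trans_le ((List.pairwise_cons.1 hl).1 b hb)
    · obtain ⟨X, a, b, Y, rfl, hab⟩ := ih hl
      exact ⟨c :: X, a, b, Y, rfl, hab⟩

theorem exists_perm_pairwise_of_swap (P : List α → Prop)
    (hswap : ∀ X a b Y, f a < f b → P (X ++ a :: b :: Y) → P (X ++ b :: a :: Y))
    (l : List α) (hl : P l) :
    ∃ m, l.Perm m ∧ m.Pairwise (fun a b => f b ≤ f a) ∧ P m := by
  induction hn : inversions f l using Nat.strong_induction_on generalizing l with
  | _ n ih =>
    by_cases hsorted : l.Pairwise fun a b => f b ≤ f a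
    · exact ⟨l, .refl l, hsorted, hl⟩
    obtain ⟨X, a, b, Y, rfl, hab⟩ := exists_adjacent_lt_of_not_pairwise f hsorted
    obtain ⟨m, hperm, hm⟩ :=
      ih _ (hn ▸ inversions_swap_lt f hab X Y) _ (hswap X a b Y hab hl) rfl
    exact ⟨m, (List.Perm.append_left X (.swap b a Y)).trans hperm, hm⟩

lemma mem_left_of_lt_of_pairwise {A B : List α} {a a' : α}
    (hsort : (A ++ a :: B).Pairwise fun x y => f y ≤ f x) (ha' : a' ∈ A ++ a :: B)
    (hlt : f a < f a') : a' ∈ A := by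
  rcases List.mem_append.1 ha' with h | h
  · exact h
  · have hB := List.pairwise_cons.1 (List.pairwise_append.1 hsort).2.1
    rcases List.mem_cons.1 h with rfl | h
    · exact absurd hlt (lt_irrefl _)
    · exact absurd (hB.1 a' h) (not_le.2 hlt)

end Sorting

section ShellingSteps

variable {α : Type*} [DecidableEq α]

/-- The complex `⟨F⟩ ∩ ⟨A⟩` is generated by codimension-one faces `J ∩ F` of `F`, `J ∈ A`. -/
def IsShellingStep (A : List (Finset α)) (F : Finset α) : Prop :=
  ∀ E ∈ A, ∃ J ∈ A, (J ∩ F).card + 1 = F.card ∧ E ∩ F ⊆ J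

def IsShellingBySteps (L : List (Finset α)) : Prop :=
  ∀ k (hk : k < L.length), IsShellingStep (L.take k) L[k]

lemma IsShellingStep.of_perm {A A' : List (Finset α)} {F : Finset α} (hA : A.Perm A')
    (h : IsShellingStep A F) : IsShellingStep A' F := by
  intro E hE
  obtain ⟨J, hJ, hcard, hsub⟩ := h E (hA.mem_iff.2 hE)
  exact ⟨J, hA.mem_iff.1 hJ, hcard, hsub⟩

lemma isShellingBySteps_append_iff {L M : List (Finset α)} :
    IsShellingBySteps (L ++ M) ↔ IsShellingBySteps L ∧
      ∀ k (hk : k < M.length), IsShellingStep (L ++ M.take k) M[k] := by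
  constructor
  · intro h
    refine ⟨fun k hk => ?_, fun k hk => ?_⟩
    · have := h k (by simp; omega)
      rwa [List.getElem_append_left hk, List.take_append_of_le_length hk.le] at this
    · have := h (L.length + k) (by simp; omega)
      rw [List.getElem_append_right (by omega), List.take_append,
        List.take_of_length_le (by omega)] at this
      simpa only [Nat.add_sub_cancel_left] using this
  · rintro ⟨hL, hM⟩ k hk
    rcases lt_or_ge k L.length with hkL | hkL
    · rw [List.getElem_append_left hkL, List.take_append_of_le_length hkL.le]
      exact hL k hkL
    · obtain ⟨j, rfl⟩ := Nat.exists_eq_add_of_le hkL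
      rw [List.getElem_append_right hkL, List.take_append, List.take_of_length_le hkL]
      simpa only [Nat.add_sub_cancel_left] using hM j (by simp at hk; omega)

lemma isShellingBySteps_append_singleton_iff {L : List (Finset α)} {F : Finset α} :
    IsShellingBySteps (L ++ [F]) ↔ IsShellingBySteps L ∧ IsShellingStep L F := by
  simp [isShellingBySteps_append_iff]

lemma IsShellingBySteps.isShellingStep {A B : List (Finset α)} {F : Finset α}
    (h : IsShellingBySteps (A ++ F :: B)) : IsShellingStep A F := by
  simpa [List.take_append] using h A.length (by simp)

lemma IsShellingBySteps.append_of_perm {L L' M : List (Finset α)}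
    (h : IsShellingBySteps (L ++ M)) (hL' : IsShellingBySteps L') (hperm : L.Perm L') :
    IsShellingBySteps (L' ++ M) := by
  rw [isShellingBySteps_append_iff] at h ⊢
  exact ⟨hL', fun k hk => (h.2 k hk).of_perm (hperm.append_right _)⟩

lemma subset_of_card_inter_add_one {J G : Finset α} (h : (J ∩ G).card + 1 = G.card)
    (hlt : J.card < G.card) : J ⊆ G :=
  inter_eq_left.1 (eq_of_subset_of_card_le inter_subset_left (by omega))

lemma IsShellingStep.exists_of_append_singleton {X : List (Finset α)} {F G : Finset α}
    (h : IsShellingStep (X ++ [F]) G) (hlt : F.card < G.card) (hFG : ¬ F ⊆ G) :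
    ∀ E ∈ X ++ [F], ∃ J ∈ X, (J ∩ G).card + 1 = G.card ∧ E ∩ G ⊆ J := by
  intro E hE
  obtain ⟨J, hJ, hcard, hsub⟩ := h E hE
  rcases List.mem_append.1 hJ with hJ | hJ
  · exact ⟨J, hJ, hcard, hsub⟩
  · obtain rfl := List.mem_singleton.1 hJ
    exact absurd (subset_of_card_inter_add_one hcard hlt) hFG

lemma IsShellingBySteps.swap {X Y : List (Finset α)} {F G : Finset α}
    (h : IsShellingBySteps (X ++ F :: G :: Y)) (hlt : F.card < G.card) (hFG : ¬ F ⊆ G) :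
    IsShellingBySteps (X ++ G :: F :: Y) := by
  have hsplit : ∀ A B : Finset α, X ++ A :: B :: Y = X ++ [A] ++ [B] ++ Y := by simp
  rw [hsplit] at h ⊢
  refine h.append_of_perm ?_ (by simpa using List.Perm.append_left X (.swap G F []))
  obtain ⟨⟨hX, hXF⟩, hXFG⟩ := by
    simpa only [isShellingBySteps_append_singleton_iff] using (isShellingBySteps_append_iff.1 h).1
  have hXG := hXFG.exists_of_append_singleton hlt hFG
  refine isShellingBySteps_append_singleton_iff.2
    ⟨isShellingBySteps_append_singleton_iff.2 ⟨hX, fun E hE => hXG E (by simp [hE])⟩, ?_⟩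
  intro E hE
  rcases List.mem_append.1 hE with hE | hE
  · obtain ⟨J, hJ, hcard, hsub⟩ := hXF E hE
    exact ⟨J, by simp [hJ], hcard, hsub⟩
  · -- `G ∩ F ⊆ J₀ ∩ F` for some earlier `J₀`, and the latter lies in a codimension-one face
    obtain rfl := List.mem_singleton.1 hE
    obtain ⟨J₀, hJ₀, -, hFJ₀⟩ := hXG F (by simp)
    obtain ⟨J₁, hJ₁, hcard, hsub⟩ := hXF J₀ hJ₀
    exact ⟨J₁, by simp [hJ₁], hcard,
      (subset_inter (by rw [inter_comm]; exact hFJ₀) inter_subset_right).trans hsub⟩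

lemma IsShellingBySteps.exists_perm_pairwise_card_ge {L : List (Finset α)}
    (h : IsShellingBySteps L) (hanti : ∀ F ∈ L, ∀ G ∈ L, F ⊆ G → F = G) :
    ∃ M, L.Perm M ∧ M.Pairwise (fun a b => b.card ≤ a.card) ∧ IsShellingBySteps M := by
  obtain ⟨M, hperm, hsort, -, hM⟩ := exists_perm_pairwise_of_swap card
    (fun M => (∀ F ∈ M, F ∈ L) ∧ IsShellingBySteps M)
    (fun X F G Y hlt ⟨hmem, hsteps⟩ => ⟨fun K hK => hmem K (by simp at hK ⊢; tauto),
      hsteps.swap hlt fun hFG =>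
        hlt.ne (congrArg card (hanti F (hmem F (by simp)) G (hmem G (by simp)) hFG))⟩)
    L ⟨fun _ => id, h⟩
  exact ⟨M, hperm, hsort, hM⟩

end ShellingSteps

lemma List.Nodup.getElem_notMem_take {α : Type*} {l : List α} (hl : l.Nodup) {k : ℕ}
    (hk : k < l.length) : l[k] ∉ l.take k := by
  intro h
  obtain ⟨j, hj, hjk⟩ := List.mem_take_iff_getElem.1 h
  have := hl.getElem_inj_iff.1 hjk
  omega

lemma exists_lt_subset_getElem_iff {α : Type*} {L : List (Finset α)} {k : ℕ} (hk : k < L.length)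
    {G : Finset α} :
    (∃ l, ∃ hl : l < k, G ⊆ L[l]'(hl.trans hk)) ↔ ∃ J ∈ L.take k, G ⊆ J := by
  constructor
  · rintro ⟨l, hl, hGl⟩
    exact ⟨L[l], List.mem_take_iff_getElem.2 ⟨l, by omega, rfl⟩, hGl⟩
  · rintro ⟨J, hJ, hGJ⟩
    obtain ⟨l, hl, rfl⟩ := List.mem_take_iff_getElem.1 hJ
    exact ⟨l, by omega, hGJ⟩

section Shelling

variable {n : ℕ}

lemma IsShellingBySteps.isShelling {L : List (Finset (Fin n))} (h : IsShellingBySteps L) :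
    IsShelling L := by
  intro k hk hk0
  simp only [exists_lt_subset_getElem_iff hk]
  refine ⟨?_, ?_⟩
  · obtain ⟨J, hJ, hcard, -⟩ := h k hk L[0] (List.mem_take_iff_getElem.2 ⟨0, by omega, rfl⟩)
    exact ⟨J ∩ L[k], inter_subset_right, hcard, J, hJ, inter_subset_left⟩
  · rintro G hG ⟨E, hE, hGE⟩
    obtain ⟨J, hJ, hcard, hsub⟩ := h k hk E hE
    exact ⟨J ∩ L[k], subset_inter ((subset_inter hGE hG).trans hsub) hG, inter_subset_right,
      hcard, J, hJ, inter_subset_left⟩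

lemma IsShelling.isShellingBySteps {L : List (Finset (Fin n))} (h : IsShelling L)
    (hnd : L.Nodup) (hanti : ∀ F ∈ L, ∀ G ∈ L, F ⊆ G → F = G) : IsShellingBySteps L := by
  intro k hk E hE
  have hk0 : 0 < k := Nat.pos_of_ne_zero (by rintro rfl; simp at hE)
  have hpure := (h k hk hk0).2
  simp only [exists_lt_subset_getElem_iff hk] at hpure
  obtain ⟨H, hEH, hHF, hcard, J, hJ, hHJ⟩ :=
    hpure (E ∩ L[k]) inter_subset_right ⟨E, hE, inter_subset_left⟩
  refine ⟨J, hJ, ?_, hEH.trans hHJ⟩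
  have hFJ : ¬ L[k] ⊆ J := fun hsub =>
    hnd.getElem_notMem_take hk (hanti _ (List.getElem_mem hk) J (List.mem_of_mem_take hJ) hsub ▸ hJ)
  have hle := card_le_card (subset_inter hHJ hHF)
  have hlt := card_lt_card
    (inter_subset_right.ssubset_of_not_subset fun hsub => hFJ (hsub.trans inter_subset_left))
  omega

end Shelling

section CodimOneFaces

variable {α : Type*} [DecidableEq α] {F G H : Finset α}

lemma union_eq_of_card_add_one (hG : G ⊆ F) (hH : H ⊆ F) (hGc : G.card + 1 = F.card)
    (hHc : H.card + 1 = F.card) (hne : G ≠ H) : G ∪ H = F := by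
  have hHG : ¬ H ⊆ G := fun h => hne (eq_of_subset_of_card_le h (by omega)).symm
  refine eq_of_subset_of_card_le (union_subset hG hH) ?_
  have := card_lt_card
    (subset_union_left.ssubset_of_not_subset fun h => hHG (subset_union_right.trans h))
  omega

lemma card_inter_add_one_of_card_add_one (hG : G ⊆ F) (hH : H ⊆ F) (hGc : G.card + 1 = F.card)
    (hHc : H.card + 1 = F.card) (hne : G ≠ H) : (G ∩ H).card + 1 = G.card := by
  have := card_union_add_card_inter G H
  rw [union_eq_of_card_add_one hG hH hGc hHc hne] at this
  omega

end CodimOneFaces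

section FacetSkeleton

variable {n : ℕ} {Δ : Finset (Finset (Fin n))}

def IsCodimOneFace (Δ : Finset (Finset (Fin n))) (G : Finset (Fin n)) : Prop :=
  ∃ F ∈ Δ, G ⊆ F ∧ G.card + 1 = F.card

lemma mem_facetSkeleton {G : Finset (Fin n)} :
    G ∈ facetSkeleton Δ ↔ Maximal (IsCodimOneFace Δ) G := by
  simp only [facetSkeleton, mem_filter, mem_biUnion, mem_powerset, maximal_iff, IsCodimOneFace]

lemma facetSkeleton_antichain (Δ : Finset (Finset (Fin n))) :
    ∀ F ∈ facetSkeleton Δ, ∀ G ∈ facetSkeleton Δ, F ⊆ G → F = G := fun _ hF _ hG hFG =>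
  (mem_facetSkeleton.1 hF).eq_of_le (mem_facetSkeleton.1 hG).prop hFG

lemma IsCodimOneFace.exists_mem_facetSkeleton_superset {H : Finset (Fin n)}
    (h : IsCodimOneFace Δ H) : ∃ H' ∈ facetSkeleton Δ, H ⊆ H' := by
  obtain ⟨H', hHH', hmax⟩ := Finite.exists_le_maximal h
  exact ⟨H', mem_facetSkeleton.2 hmax, hHH'⟩

lemma not_subset_of_mem_facetSkeleton (hanti : ∀ F ∈ Δ, ∀ G ∈ Δ, F ⊆ G → F = G)
    {F H : Finset (Fin n)} (hF : F ∈ Δ)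
    (hH : H ∈ facetSkeleton Δ) : ¬ F ⊆ H := by
  intro hFH
  obtain ⟨F', hF', hHF', hcard⟩ := (mem_facetSkeleton.1 hH).prop
  obtain rfl := hanti F hF F' hF' (hFH.trans hHF')
  have := card_le_card hFH
  omega

lemma card_add_one_of_mem_facetSkeleton (hanti : ∀ F ∈ Δ, ∀ G ∈ Δ, F ⊆ G → F = G)
    {F G : Finset (Fin n)} (hG : G ∈ facetSkeleton Δ)
    (hF : F ∈ Δ) (hGF : G ⊆ F) : G.card + 1 = F.card := by
  have hlt := card_lt_card (hGF.ssubset_of_not_subset (not_subset_of_mem_facetSkeleton hanti hF hG))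
  obtain ⟨H, hGH, hHF, hcard⟩ :=
    exists_subsuperset_card_eq hGF (n := F.card - 1) (by omega) (by omega)
  obtain rfl := (mem_facetSkeleton.1 hG).eq_of_le ⟨F, hF, hHF, by omega⟩ hGH
  omega

end FacetSkeleton

section SkeletonOrder

variable {α : Type*} [DecidableEq α] (S : Finset (Finset α))

noncomputable def newFacets (A : List (Finset α)) (F : Finset α) : List (Finset α) :=
  (S.filter fun G => G ⊆ F ∧ ∀ P ∈ A, ¬ G ⊆ P).toList

noncomputable def skeletonOrderFrom : List (Finset α) → List (Finset α) → List (Finset α)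
  | _, [] => []
  | A, F :: L => newFacets S A F ++ skeletonOrderFrom (A ++ [F]) L

noncomputable def skeletonOrder (L : List (Finset α)) : List (Finset α) :=
  skeletonOrderFrom S [] L

variable {S}

lemma mem_newFacets {A : List (Finset α)} {F G : Finset α} :
    G ∈ newFacets S A F ↔ G ∈ S ∧ G ⊆ F ∧ ∀ P ∈ A, ¬ G ⊆ P := by
  simp [newFacets]

lemma skeletonOrderFrom_append (A L M : List (Finset α)) :
    skeletonOrderFrom S A (L ++ M) = skeletonOrderFrom S A L ++ skeletonOrderFrom S (A ++ L) M := by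
  induction L generalizing A with
  | nil => simp [skeletonOrderFrom]
  | cons F L ih => simp [skeletonOrderFrom, ih]

lemma skeletonOrder_append_singleton (L : List (Finset α)) (F : Finset α) :
    skeletonOrder S (L ++ [F]) = skeletonOrder S L ++ newFacets S L F := by
  simp [skeletonOrder, skeletonOrderFrom_append, skeletonOrderFrom]

lemma mem_skeletonOrder {L : List (Finset α)} {G : Finset α} :
    G ∈ skeletonOrder S L ↔ G ∈ S ∧ ∃ F ∈ L, G ⊆ F := by
  induction L using List.reverseRecOn with
  | nil => simp [skeletonOrder, skeletonOrderFrom]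
  | append_singleton L F ih =>
    rw [skeletonOrder_append_singleton, List.mem_append, ih, mem_newFacets]
    grind

lemma nodup_skeletonOrder (L : List (Finset α)) : (skeletonOrder S L).Nodup := by
  induction L using List.reverseRecOn with
  | nil => simp [skeletonOrder, skeletonOrderFrom]
  | append_singleton L F ih =>
    rw [skeletonOrder_append_singleton]
    refine ih.append (nodup_toList _) fun G hG hG' => ?_
    obtain ⟨-, P, hP, hGP⟩ := mem_skeletonOrder.1 hG
    exact (mem_newFacets.1 hG').2.2 P hP hGP

lemma isShellingBySteps_skeletonOrder {L : List (Finset α)}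
    (h : ∀ A F B, L = A ++ F :: B → ∀ k (hk : k < (newFacets S A F).length),
      IsShellingStep (skeletonOrder S A ++ (newFacets S A F).take k) (newFacets S A F)[k]) :
    IsShellingBySteps (skeletonOrder S L) := by
  induction L using List.reverseRecOn with
  | nil => simp [skeletonOrder, skeletonOrderFrom, IsShellingBySteps]
  | append_singleton L F ih =>
    rw [skeletonOrder_append_singleton, isShellingBySteps_append_iff]
    exact ⟨ih fun A F' B hL => h A F' (B ++ [F]) (by simp [hL]), h L F [] rfl⟩

end SkeletonOrder

section ShellingOfSkeleton

variable {n : ℕ} {Δ : Finset (Finset (Fin n))} {A : List (Finset (Fin n))} {F : Finset (Fin n)}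

lemma exists_meet_of_mem_skeletonOrder (hanti : ∀ F ∈ Δ, ∀ G ∈ Δ, F ⊆ G → F = G)
    (hF : F ∈ Δ) (hstep : IsShellingStep A F) (hbig : ∀ F' ∈ Δ, F.card < F'.card → F' ∈ A)
    {E G : Finset (Fin n)} (hG : G ∈ newFacets (facetSkeleton Δ) A F)
    (hE : E ∈ skeletonOrder (facetSkeleton Δ) A) :
    ∃ J ∈ skeletonOrder (facetSkeleton Δ) A, (J ∩ G).card + 1 = G.card ∧ E ∩ G ⊆ J := by
  obtain ⟨hGS, hGF, hGnew⟩ := mem_newFacets.1 hG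
  have hGc := card_add_one_of_mem_facetSkeleton hanti hGS hF hGF
  obtain ⟨-, Fm, hFm, hEFm⟩ := mem_skeletonOrder.1 hE
  obtain ⟨J₀, hJ₀, hHc, hFmH⟩ := hstep Fm hFm
  have hGH : G ≠ J₀ ∩ F := fun h => hGnew J₀ hJ₀ (h ▸ inter_subset_left)
  obtain ⟨H', hH'S, hHH'⟩ :=
    IsCodimOneFace.exists_mem_facetSkeleton_superset ⟨F, hF, inter_subset_right, hHc⟩
  have hGH' : ¬ G ⊆ H' := fun h => not_subset_of_mem_facetSkeleton hanti hF hH'S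
    (union_eq_of_card_add_one hGF inter_subset_right hGc hHc hGH ▸ union_subset h hHH')
  refine ⟨H', mem_skeletonOrder.2 ⟨hH'S, ?_⟩, ?_, ?_⟩
  · -- `H'` lies in `J₀` if it equals `J₀ ∩ F`, and otherwise in a facet larger than `F`
    obtain ⟨F', hF', hH'F', hcard⟩ := (mem_facetSkeleton.1 hH'S).prop
    rcases eq_or_ne (J₀ ∩ F) H' with rfl | hne
    · exact ⟨J₀, hJ₀, inter_subset_left⟩
    · have := card_lt_card (hHH'.ssubset_of_ne hne)
      exact ⟨F', hbig F' hF' (by omega), hH'F'⟩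
  · have hle := card_le_card (inter_subset_inter_right hHH' : J₀ ∩ F ∩ G ⊆ H' ∩ G)
    have hlt := card_lt_card
      (inter_subset_right.ssubset_of_not_subset fun h => hGH' (h.trans inter_subset_left))
    have := card_inter_add_one_of_card_add_one hGF inter_subset_right hGc hHc hGH
    rw [inter_comm] at this
    omega
  · exact (subset_inter ((inter_subset_inter hEFm hGF).trans hFmH)
      (inter_subset_right.trans hGF)).trans hHH'

lemma isShellingStep_newFacets (hanti : ∀ F ∈ Δ, ∀ G ∈ Δ, F ⊆ G → F = G)
    (hF : F ∈ Δ) (hstep : IsShellingStep A F) (hbig : ∀ F' ∈ Δ, F.card < F'.card → F' ∈ A)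
    (k : ℕ) (hk : k < (newFacets (facetSkeleton Δ) A F).length) :
    IsShellingStep (skeletonOrder (facetSkeleton Δ) A ++ (newFacets (facetSkeleton Δ) A F).take k)
      (newFacets (facetSkeleton Δ) A F)[k] := by
  set N := newFacets (facetSkeleton Δ) A F
  obtain ⟨hGS, hGF, -⟩ := mem_newFacets.1 (List.getElem_mem hk : N[k] ∈ N)
  have hGc := card_add_one_of_mem_facetSkeleton hanti hGS hF hGF
  intro E hE
  rcases List.mem_append.1 hE with hE | hE
  · obtain ⟨J, hJ, hcard, hsub⟩ :=
      exists_meet_of_mem_skeletonOrder hanti hF hstep hbig (List.getElem_mem hk) hE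
    exact ⟨J, List.mem_append_left _ hJ, hcard, hsub⟩
  · have hEG : E ≠ N[k] := fun h => (nodup_toList _).getElem_notMem_take hk (h ▸ hE)
    obtain ⟨hES, hEF, -⟩ := mem_newFacets.1 (List.mem_of_mem_take hE)
    refine ⟨E, List.mem_append_right _ hE, ?_, inter_subset_left⟩
    rw [inter_comm]
    exact card_inter_add_one_of_card_add_one hGF hEF hGc
      (card_add_one_of_mem_facetSkeleton hanti hES hF hEF) hEG.symm

theorem shellable_facetSkeleton (hanti : ∀ F ∈ Δ, ∀ G ∈ Δ, F ⊆ G → F = G) (h : Shellable Δ) :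
    Shellable (facetSkeleton Δ) := by
  obtain ⟨L, hnd, rfl, hL⟩ := h
  have hantiL : ∀ F ∈ L, ∀ G ∈ L, F ⊆ G → F = G := by simpa using hanti
  obtain ⟨M, hperm, hsort, hM⟩ :=
    (hL.isShellingBySteps hnd hantiL).exists_perm_pairwise_card_ge hantiL
  refine ⟨skeletonOrder (facetSkeleton L.toFinset) M, nodup_skeletonOrder M, ?_,
    IsShellingBySteps.isShelling ?_⟩
  · ext G
    rw [List.mem_toFinset, mem_skeletonOrder]
    refine ⟨And.left, fun hG => ⟨hG, ?_⟩⟩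
    obtain ⟨F, hF, hGF, -⟩ := (mem_facetSkeleton.1 hG).prop
    exact ⟨F, hperm.mem_iff.1 (List.mem_toFinset.1 hF), hGF⟩
  · refine isShellingBySteps_skeletonOrder fun A F B hMAB => ?_
    subst hMAB
    have hF : F ∈ L.toFinset := List.mem_toFinset.2 (hperm.mem_iff.2 (by simp))
    exact isShellingStep_newFacets hanti hF hM.isShellingStep fun F' hF' hlt =>
      mem_left_of_lt_of_pairwise card hsort (hperm.mem_iff.1 (List.mem_toFinset.1 hF')) hlt

theorem shellable_iterate_facetSkeleton (hanti : ∀ F ∈ Δ, ∀ G ∈ Δ, F ⊆ G → F = G)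
    (h : Shellable Δ) (i : ℕ) : Shellable (facetSkeleton^[i] Δ) := by
  induction i generalizing Δ with
  | zero => exact h
  | succ i ih => exact ih (facetSkeleton_antichain Δ) (shellable_facetSkeleton hanti h)

end ShellingOfSkeleton

theorem facetSkeleton_shellable_general {n : ℕ} (Δ : Finset (Finset (Fin n))) (d : ℕ)
    (hanti : ∀ F ∈ Δ, ∀ G ∈ Δ, F ⊆ G → F = G)
    (h : Shellable Δ) :
    ∀ i ≤ d, Shellable (facetSkeleton^[i] Δ) :=
  fun i _ => shellable_iterate_facetSkeleton hanti h i

/-- If `Γ` is a shellable simplicial complex of dimension `d` (given by its facet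
set, an antichain), then the `i`-th facet skeleton `Γ^[i]` is shellable for all
`i ≤ d`. -/
theorem facetSkeleton_shellable {n : ℕ} (Δ : Finset (Finset (Fin n))) (d : ℕ)
    (hanti : ∀ F ∈ Δ, ∀ G ∈ Δ, F ⊆ G → F = G)
    (hdim : ∀ F ∈ Δ, F.card ≤ d + 1) (hdim' : ∃ F ∈ Δ, F.card = d + 1)
    (h : Shellable Δ) :
    ∀ i ≤ d, Shellable (facetSkeleton^[i] Δ) :=
  facetSkeleton_shellable_general Δ d hanti h
end

section
/- Let I be a monomial ideal of forest type and X' a subset of the variables. Then the minor I_{(∅,X')} obtained by setting all variables in X' equal to 1 is again a monomial ideal of forest type. -/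
attribute [local instance] Classical.propDecidable

/-- The greatest common divisor of two monomials (pointwise minimum of exponents). -/
noncomputable def mgcd {n : ℕ} (u v : Mon n) : Mon n :=
  Finsupp.zipWith min (min_self 0) u v

/-- `u` is a leaf of the set `A` of monomials: either `A = {u}`, or there is a branch
`v ∈ A`, `v ≠ u`, with `gcd(u,w) ∣ gcd(u,v)` for all `w ∈ A`, `w ≠ u`. -/
def IsLeaf {n : ℕ} (A : Finset (Mon n)) (u : Mon n) : Prop :=
  u ∈ A ∧ (A = {u} ∨ ∃ v ∈ A, v ≠ u ∧ ∀ w ∈ A, w ≠ u → mgcd u w ≤ mgcd u v)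

/-- A monomial ideal is of forest type if every nonempty subset of its minimal monomial
generating set has a leaf. -/
def ForestType {n : ℕ} (G : Finset (Mon n)) : Prop :=
  ∀ A ⊆ G, A.Nonempty → ∃ u, IsLeaf A u

/-- The minimal monomials (w.r.t. divisibility) in a finite set of monomials. -/
noncomputable def minGens {n : ℕ} (T : Finset (Mon n)) : Finset (Mon n) :=
  T.filter fun u => ∀ v ∈ T, v ≤ u → v = u

/-- The minimal monomial generating set of the minor `I_{(X₁,X₂)}`, obtained from the
monomial ideal with minimal generating set `G` by setting the variables in `X₁` equal
to `0` and the variables in `X₂` equal to `1`. -/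
noncomputable def minorGens {n : ℕ} (G : Finset (Mon n)) (X₁ X₂ : Finset (Fin n)) :
    Finset (Mon n) :=
  minGens ((G.filter fun u => ∀ i ∈ X₁, u i = 0).image fun u =>
    Finsupp.filter (fun i => i ∉ X₂) u)

/-- `x_i` is a free variable of the monomial ideal with minimal monomial generating
set `G`: it divides exactly one minimal generator. -/
def IsFreeVar {n : ℕ} (G : Finset (Mon n)) (i : Fin n) : Prop :=
  ∃ u ∈ G, 0 < u i ∧ ∀ v ∈ G, 0 < v i → v = u

/-- A monomial ideal has the free variable property if every (nonzero, proper) minor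
of it has a free variable. -/
def FreeVarProperty {n : ℕ} (G : Finset (Mon n)) : Prop :=
  ∀ X₁ X₂ : Finset (Fin n), Disjoint X₁ X₂ → (minorGens G X₁ X₂).Nonempty →
    0 ∉ minorGens G X₁ X₂ → ∃ i, IsFreeVar (minorGens G X₁ X₂) i

lemma filter_mgcd {n : ℕ} (p : Fin n → Prop) (u v : Mon n) :
    Finsupp.filter p (mgcd u v) = mgcd (Finsupp.filter p u) (Finsupp.filter p v) := by
  ext i
  simp only [mgcd, Finsupp.filter_apply, Finsupp.zipWith_apply]
  split <;> simp

lemma filter_mono {n : ℕ} (p : Fin n → Prop) {u v : Mon n} (h : u ≤ v) :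
    Finsupp.filter p u ≤ Finsupp.filter p v := by
  intro i
  simp only [Finsupp.filter_apply]
  split
  · exact h i
  · exact le_refl 0

/-- If `I` is a monomial ideal of forest type, then for any set `X'` of variables the
minor `I_{(∅,X')}`, obtained by setting the variables in `X'` equal to `1`, is again
of forest type. -/
theorem minor_forestType {n : ℕ} (G : Finset (Mon n)) (h : ForestType G)
    (X' : Finset (Fin n)) : ForestType (minorGens G ∅ X') := by
  set π : Mon n → Mon n := fun u => Finsupp.filter (fun i => i ∉ X') u with hπ
  intro A hA hAne
  -- every element of A has a preimage in G
  have hpre : ∀ a ∈ A, ∃ g ∈ G, π g = a := by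
    intro a ha
    have := hA ha
    simp only [minorGens, minGens, Finset.mem_filter, Finset.mem_image] at this
    obtain ⟨⟨g, hg, hga⟩, -⟩ := this
    exact ⟨g, hg.1, hga⟩
  -- choice function
  set f : Mon n → Mon n := fun a =>
    if h : ∃ g ∈ G, π g = a then h.choose else 0 with hf
  have hfG : ∀ a ∈ A, f a ∈ G := by
    intro a ha
    have hx := hpre a ha
    simp only [hf, dif_pos hx]
    exact hx.choose_spec.1
  have hfπ : ∀ a ∈ A, π (f a) = a := by
    intro a ha
    have hx := hpre a ha
    simp only [hf, dif_pos hx]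
    exact hx.choose_spec.2
  set B : Finset (Mon n) := A.image f with hB
  have hBG : B ⊆ G := by
    intro b hb
    simp only [hB, Finset.mem_image] at hb
    obtain ⟨a, ha, rfl⟩ := hb
    exact hfG a ha
  have hBne : B.Nonempty := hAne.image f
  obtain ⟨u, huB, hleaf⟩ := h B hBG hBne
  obtain ⟨a, haA, hau⟩ := Finset.mem_image.mp (hB ▸ huB)
  have hπu : π u ∈ A := by rw [← hau, hfπ a haA]; exact haA
  refine ⟨π u, hπu, ?_⟩
  rcases hleaf with hsing | ⟨v, hvB, hvu, hbranch⟩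
  · left
    apply Finset.ext
    intro x
    simp only [Finset.mem_singleton]
    constructor
    · intro hx
      have : f x ∈ B := Finset.mem_image_of_mem f hx
      rw [hsing, Finset.mem_singleton] at this
      rw [← hfπ x hx, this]
    · rintro rfl; exact hπu
  · right
    obtain ⟨a', ha'A, ha'v⟩ := Finset.mem_image.mp (hB ▸ hvB)
    have hπv : π v ∈ A := by rw [← ha'v, hfπ a' ha'A]; exact ha'A
    refine ⟨π v, hπv, ?_, ?_⟩
    · intro heq
      apply hvu
      have : a' = a := by
        rw [← hfπ a' ha'A, ← hfπ a haA, ha'v, hau, heq]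
      rw [← ha'v, ← hau, this]
    · intro w hwA hwu
      have hfwB : f w ∈ B := Finset.mem_image_of_mem f hwA
      have hfwu : f w ≠ u := by
        intro heq
        apply hwu
        rw [← hfπ w hwA, heq]
      have := hbranch (f w) hfwB hfwu
      have key := filter_mono (fun i => i ∉ X') this
      rw [filter_mgcd, filter_mgcd] at key
      have key2 : mgcd (π u) (π (f w)) ≤ mgcd (π u) (π v) := by simp only [hπ]; convert key using 2 <;> (ext i; simp [Finsupp.filter_apply])
      rw [hfπ w hwA] at key2
      exact key2
end

section
/- Let K ⊂ S be a monomial ideal and u a monomial in S that is a regular element on S/K. If S/K is pretty clean, then S/(K, u) is pretty clean. -/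
attribute [local instance] Classical.propDecidable

/-- The monomial ideal of `MvPolynomial (Fin n) K` generated by the monomials with
exponent vectors in `G`. -/
noncomputable def idealOf {n : ℕ} (K : Type*) [Field K] (G : Set (Mon n)) :
    Ideal (MvPolynomial (Fin n) K) :=
  Ideal.span ((fun u => MvPolynomial.monomial u (1 : K)) '' G)

/-- An ideal of the polynomial ring is a monomial ideal if it is generated by
monomials. -/
def IsMonomialIdeal {n : ℕ} {K : Type*} [Field K]
    (I : Ideal (MvPolynomial (Fin n) K)) : Prop :=
  ∃ G : Set (Mon n), I = idealOf K G

/-- A monomial prime ideal of the polynomial ring: an ideal generated by a subset of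
the variables. -/
def IsVarIdeal {n : ℕ} {K : Type*} [Field K]
    (P : Ideal (MvPolynomial (Fin n) K)) : Prop :=
  ∃ s : Set (Fin n), P = Ideal.span (MvPolynomial.X '' s)

/-- `S/I` is pretty clean: there is a filtration `I = I_0 ⊆ I_1 ⊆ ⋯ ⊆ I_r = S` by
monomial ideals with `I_j/I_{j-1} ≅ S/P_j` for monomial prime ideals `P_j`, such that
`i < j` and `P_i ⊆ P_j` imply `P_i = P_j`. -/
def PrettyClean {n : ℕ} {K : Type*} [Field K]
    (I : Ideal (MvPolynomial (Fin n) K)) : Prop :=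
  ∃ (r : ℕ) (c : Fin (r + 1) → Ideal (MvPolynomial (Fin n) K))
    (P : Fin r → Ideal (MvPolynomial (Fin n) K)),
    c 0 = I ∧ c (Fin.last r) = ⊤ ∧
    (∀ j : Fin (r + 1), IsMonomialIdeal (c j)) ∧
    (∀ j : Fin r, c j.castSucc ≤ c j.succ) ∧
    (∀ j : Fin r, (P j).IsPrime ∧ IsVarIdeal (P j)) ∧
    (∀ j : Fin r, Nonempty
      ((↥(c j.succ) ⧸ Submodule.comap (c j.succ).subtype (c j.castSucc)) ≃ₗ[MvPolynomial (Fin n) K]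
        (MvPolynomial (Fin n) K ⧸ P j))) ∧
    (∀ i j : Fin r, i < j → P i ≤ P j → P i = P j)

/-!
Record a pretty clean filtration of `S/K₀` as a chain `K₀ = C₀ ⊂ ⋯ ⊂ C_r = S` with
`C_{j+1} = C_j + (w_j)` and `C_j : w_j = P_j`. An element of `C_{s+1} ∖ C_s` has annihilator
modulo `C_s` inside `P_s`; with the pretty clean ordering this shows that a zero divisor on
`S/C_{j+1}` yields one on `S/C_j`, so `u`, regular on `S/C₀`, is regular on every `S/C_j` and
lies in no `P_j`.

Write `u = x_1 ⋯ x_d` as a product of variables and refine each step `C_j ⊂ C_{j+1}` modulo `u`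
by the ideals `C_j + (u) + (x_{t+1} ⋯ x_d) C_{j+1}`, `t = 0, …, d`. Regularity of `u` on
`S/C_{j+1}` makes the successive quotients cyclic with annihilators `P_j + (x_t)`, again generated
by variables. Since no `x_t` lies in any `P_i`, an inclusion `P_i + (x_t) ⊆ P_j + (x_{t'})` forces
`x_t = x_{t'}` and `P_i ⊆ P_j`, so the pretty clean ordering is inherited.
-/

theorem Nat.apply_add_one_div_mod {α : Type*} {T : ℕ → ℕ → α} {d k : ℕ}
    (hT : T (k / d) d = T (k / d + 1) 0) :
    T ((k + 1) / d) ((k + 1) % d) = T (k / d) (k % d + 1) := by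
  rcases Nat.eq_zero_or_pos d with rfl | hd
  · simp
  obtain ⟨q, t, ht, rfl⟩ : ∃ q t, t < d ∧ k = d * q + t :=
    ⟨k / d, k % d, Nat.mod_lt k hd, (Nat.div_add_mod k d).symm⟩
  simp only [Nat.mul_add_div hd, Nat.div_eq_of_lt ht, add_zero, Nat.mul_add_mod,
    Nat.mod_eq_of_lt ht] at hT ⊢
  rw [add_assoc]
  rcases (Nat.add_one_le_of_lt ht).lt_or_eq with h | h
  · rw [Nat.mul_add_div hd, Nat.div_eq_of_lt h, add_zero, Nat.mul_add_mod, Nat.mod_eq_of_lt h]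
  · rw [h, ← Nat.mul_succ, Nat.mul_div_cancel_left _ hd, Nat.mul_mod_right, hT]

section CommRing

variable {S : Type*} [CommRing S]

theorem Ideal.mem_sup_span_singleton_iff {I : Ideal S} {w f : S} :
    f ∈ I ⊔ Ideal.span {w} ↔ ∃ g, f - g * w ∈ I := by
  rw [sup_comm, Ideal.mem_span_singleton_sup]
  constructor
  · rintro ⟨g, b, hb, rfl⟩
    exact ⟨g, by simpa using hb⟩
  · rintro ⟨g, hg⟩
    exact ⟨g, f - g * w, hg, by ring⟩

noncomputable def Ideal.mulToQuot (C C' : Ideal S) (w : C') :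
    S →ₗ[S] ↥C' ⧸ Submodule.comap C'.subtype C :=
  (Submodule.comap C'.subtype C).mkQ ∘ₗ LinearMap.toSpanSingleton S C' w

theorem Ideal.ker_mulToQuot (C C' : Ideal S) (w : C') :
    LinearMap.ker (Ideal.mulToQuot C C' w) = C.colon (Ideal.span {(w : S)}) := by
  ext f
  simp only [Ideal.mulToQuot, LinearMap.mem_ker, LinearMap.comp_apply,
    LinearMap.toSpanSingleton_apply, Submodule.mkQ_apply, Submodule.Quotient.mk_eq_zero,
    Submodule.mem_comap, Submodule.subtype_apply, Submodule.coe_smul, smul_eq_mul,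
    Ideal.mem_colon_span_singleton]

theorem Ideal.mulToQuot_surjective_iff {C C' : Ideal S} (hle : C ≤ C') (w : C') :
    Function.Surjective (Ideal.mulToQuot C C' w) ↔ C' = C ⊔ Ideal.span {(w : S)} := by
  constructor
  · intro hsurj
    refine le_antisymm (fun y hy => ?_) (sup_le hle (Ideal.span_singleton_le_iff_mem _ |>.2 w.2))
    obtain ⟨g, hg⟩ := hsurj (Submodule.Quotient.mk ⟨y, hy⟩)
    rw [Ideal.mulToQuot, LinearMap.comp_apply, Submodule.mkQ_apply, Submodule.Quotient.eq] at hg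
    refine Ideal.mem_sup_span_singleton_iff.2 ⟨g, ?_⟩
    simpa using neg_mem hg
  · intro hC' x
    obtain ⟨⟨y, hy⟩, rfl⟩ := Submodule.Quotient.mk_surjective _ x
    obtain ⟨g, hg⟩ := Ideal.mem_sup_span_singleton_iff.1 (hC' ▸ hy)
    refine ⟨g, (Submodule.Quotient.eq _).2 ?_⟩
    simpa using neg_mem hg

theorem Ideal.nonempty_quotEquiv_iff {C C' P : Ideal S} (hle : C ≤ C') :
    Nonempty ((↥C' ⧸ Submodule.comap C'.subtype C) ≃ₗ[S] (S ⧸ P)) ↔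
      ∃ w, C' = C ⊔ Ideal.span {w} ∧ C.colon (Ideal.span {w}) = P := by
  constructor
  · rintro ⟨e⟩
    obtain ⟨w, hw⟩ := Submodule.Quotient.mk_surjective _ (e.symm (Submodule.Quotient.mk 1))
    have hφ : Ideal.mulToQuot C C' w = e.symm.toLinearMap ∘ₗ P.mkQ := by
      ext
      simp [Ideal.mulToQuot, hw]
    refine ⟨w, (Ideal.mulToQuot_surjective_iff hle w).1 ?_, ?_⟩
    · rw [hφ]
      exact e.symm.surjective.comp P.mkQ_surjective
    · rw [← Ideal.ker_mulToQuot, hφ, LinearEquiv.ker_comp, Submodule.ker_mkQ]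
  · rintro ⟨w, hC', hP⟩
    have hw : w ∈ C' := hC' ▸ Ideal.mem_sup_right (Ideal.mem_span_singleton_self w)
    have hsurj := (Ideal.mulToQuot_surjective_iff hle ⟨w, hw⟩).2 hC'
    have hker := Ideal.ker_mulToQuot C C' ⟨w, hw⟩
    exact ⟨((Submodule.quotEquivOfEq _ _ (hker.trans hP).symm).trans
      ((Ideal.mulToQuot C C' ⟨w, hw⟩).quotKerEquivOfSurjective hsurj)).symm⟩

/-- Each step has `ideal (j + 1) / ideal j ≅ S / ann j` (see `Ideal.nonempty_quotEquiv_iff`);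
values at indices past `length` are irrelevant. -/
structure CyclicFiltration (I : Ideal S) where
  length : ℕ
  ideal : ℕ → Ideal S
  ann : ℕ → Ideal S
  gen : ℕ → S
  ideal_zero : ideal 0 = I
  ideal_length : ideal length = ⊤
  ideal_succ : ∀ j < length, ideal (j + 1) = ideal j ⊔ Ideal.span {gen j}
  colon_gen : ∀ j < length, (ideal j).colon (Ideal.span {gen j}) = ann j

namespace CyclicFiltration

variable {I : Ideal S} (F : CyclicFiltration I)

def IsPrettyClean : Prop :=
  (∀ j < F.length, (F.ann j).IsPrime) ∧
    ∀ i j, i < j → j < F.length → F.ann i ≤ F.ann j → F.ann i = F.ann j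

variable {F} {j k s : ℕ} {f u : S}

theorem ideal_le_succ (hj : j < F.length) : F.ideal j ≤ F.ideal (j + 1) :=
  F.ideal_succ j hj ▸ le_sup_left

theorem ideal_mono (hjk : j ≤ k) (hk : k ≤ F.length) : F.ideal j ≤ F.ideal k := by
  induction k, hjk using Nat.le_induction with
  | base => exact le_rfl
  | succ k _ ih => exact (ih (by omega)).trans (ideal_le_succ (by omega))

theorem mul_gen_mem_iff (hj : j < F.length) : f * F.gen j ∈ F.ideal j ↔ f ∈ F.ann j := by
  rw [← F.colon_gen j hj, Ideal.mem_colon_span_singleton]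

theorem exists_notMem_and_mem_succ (hj : j ≤ F.length) (hf : f ∉ F.ideal j) :
    ∃ s, j ≤ s ∧ s < F.length ∧ f ∉ F.ideal s ∧ f ∈ F.ideal (s + 1) := by
  by_contra! h
  have : ∀ k, j ≤ k → k ≤ F.length → f ∉ F.ideal k := by
    intro k hjk
    induction k, hjk using Nat.le_induction with
    | base => exact fun _ => hf
    | succ k hjk ih => exact fun hk => h k hjk (by omega) (ih (by omega))
  exact this F.length hj le_rfl (F.ideal_length ▸ Submodule.mem_top)

theorem gen_notMem (hF : F.IsPrettyClean) (hj : j < F.length) : F.gen j ∉ F.ideal j := by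
  rw [← one_mul (F.gen j), mul_gen_mem_iff hj]
  exact (hF.1 j hj).ne_top ∘ (Ideal.eq_top_iff_one _).2

theorem colon_le_ann (hF : F.IsPrettyClean) (hs : s < F.length) (hf : f ∉ F.ideal s)
    (hf' : f ∈ F.ideal (s + 1)) : (F.ideal s).colon (Ideal.span {f}) ≤ F.ann s := by
  obtain ⟨g, hg⟩ := Ideal.mem_sup_span_singleton_iff.1 (F.ideal_succ s hs ▸ hf')
  have hgP : g ∉ F.ann s := fun hgP => hf <| by
    simpa using add_mem hg ((mul_gen_mem_iff hs).2 hgP)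
  intro h hh
  rw [Ideal.mem_colon_span_singleton] at hh
  have : (h * g) * F.gen s ∈ F.ideal s := by
    rw [show (h * g) * F.gen s = h * f - h * (f - g * F.gen s) by ring]
    exact sub_mem hh (Ideal.mul_mem_left _ h hg)
  exact ((hF.1 s hs).mem_or_mem ((mul_gen_mem_iff hs).1 this)).resolve_right hgP

theorem regular_ideal_succ (hF : F.IsPrettyClean) (hj : j < F.length)
    (hu : ∀ f, u * f ∈ F.ideal j → f ∈ F.ideal j) :
    ∀ f, u * f ∈ F.ideal (j + 1) → f ∈ F.ideal (j + 1) := by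
  intro f huf
  by_contra hf
  -- The annihilator of `f` modulo the step `s` where `f` enters contains `ann j` and `u`, so the
  -- ordering gives `u ∈ ann j = ann s`; then `u * gen j ∈ ideal j` although `gen j ∉ ideal j`.
  obtain ⟨g, hg⟩ := Ideal.mem_sup_span_singleton_iff.1 (F.ideal_succ j hj ▸ huf)
  have hann : F.ann j ≤ (F.ideal j).colon (Ideal.span {f}) := fun p hp => by
    rw [Ideal.mem_colon_span_singleton, mul_comm]
    refine hu _ ?_
    rw [show u * (f * p) = p * (u * f - g * F.gen j) + (g * p) * F.gen j by ring]
    exact add_mem (Ideal.mul_mem_left _ p hg) ((mul_gen_mem_iff hj).2 (Ideal.mul_mem_left _ g hp))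
  obtain ⟨s, hjs, hs, hfs, hfs'⟩ := exists_notMem_and_mem_succ hj hf
  have hcolon := colon_le_ann hF hs hfs hfs'
  have hann_eq : F.ann j = F.ann s := hF.2 j s (by omega) hs <| hann.trans <|
    (Submodule.colon_mono (ideal_mono (by omega) hs.le) le_rfl).trans hcolon
  have hu_ann : u ∈ F.ann j := hann_eq ▸ hcolon (by
    rw [Ideal.mem_colon_span_singleton]
    exact ideal_mono hjs hs.le huf)
  exact gen_notMem hF hj (hu _ ((mul_gen_mem_iff hj).2 hu_ann))

theorem regular_ideal (hF : F.IsPrettyClean) (hu : ∀ f, u * f ∈ I → f ∈ I)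
    (hj : j ≤ F.length) :
    ∀ f, u * f ∈ F.ideal j → f ∈ F.ideal j := by
  induction j with
  | zero => rwa [F.ideal_zero]
  | succ j ih => exact regular_ideal_succ hF hj (ih (by omega))

theorem notMem_ann_of_dvd (hF : F.IsPrettyClean) (hu : ∀ f, u * f ∈ I → f ∈ I)
    (hj : j < F.length) {x : S} (hx : x ∣ u) : x ∉ F.ann j := fun hxP => by
  have hu_ann : u ∈ F.ann j := by
    obtain ⟨y, rfl⟩ := hx
    exact Ideal.mul_mem_right y _ hxP
  exact gen_notMem hF hj (regular_ideal hF hu hj.le _ ((mul_gen_mem_iff hj).2 hu_ann))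

end CyclicFiltration

section Refinement

variable {C C' J Q : Ideal S} {w u x v : S}

theorem Ideal.colon_sup_span_singleton_of_regular (hC' : C' = C ⊔ Ideal.span {w})
    (hQ : C.colon (Ideal.span {w}) = Q) (hu : ∀ f, u * f ∈ C' → f ∈ C') :
    (C ⊔ Ideal.span {u}).colon (Ideal.span {w}) = Q ⊔ Ideal.span {u} := by
  have hw : w ∈ C' := hC' ▸ Ideal.mem_sup_right (Ideal.mem_span_singleton_self w)
  ext f
  rw [Ideal.mem_colon_span_singleton, Ideal.mem_sup_span_singleton_iff,
    Ideal.mem_sup_span_singleton_iff, ← hQ]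
  constructor
  · rintro ⟨b, hb⟩
    have hb' : b ∈ C' := hu b <| by
      rw [show u * b = f * w - (f * w - b * u) by ring]
      exact sub_mem (C'.mul_mem_left f hw) (hC' ▸ Ideal.mem_sup_left hb)
    obtain ⟨g, hg⟩ := Ideal.mem_sup_span_singleton_iff.1 (hC' ▸ hb')
    refine ⟨g, Ideal.mem_colon_span_singleton.2 ?_⟩
    rw [show (f - g * u) * w = (f * w - b * u) + u * (b - g * w) by ring]
    exact add_mem hb (C.mul_mem_left u hg)
  · rintro ⟨g, hg⟩
    refine ⟨g * w, ?_⟩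
    rw [show f * w - g * w * u = (f - g * u) * w by ring]
    exact Ideal.mem_colon_span_singleton.1 hg

theorem Ideal.sup_span_singleton_mul_eq (hC' : C' = C ⊔ Ideal.span {w}) (hCJ : C ≤ J) :
    J ⊔ Ideal.span {v} * C' = J ⊔ Ideal.span {x * v} * C' ⊔ Ideal.span {v * w} := by
  have hw : w ∈ C' := hC' ▸ Ideal.mem_sup_right (Ideal.mem_span_singleton_self w)
  rw [← Ideal.span_singleton_mul_span_singleton v w]
  apply le_antisymm
  · refine sup_le (le_sup_left.trans le_sup_left) ?_
    rw [hC', Ideal.mul_sup]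
    exact sup_le (Ideal.mul_le_right.trans (hCJ.trans (le_sup_left.trans le_sup_left)))
      le_sup_right
  · refine sup_le (sup_le le_sup_left (le_sup_of_le_right (Ideal.mul_mono_left ?_)))
      (le_sup_of_le_right (Ideal.mul_mono_right ((Ideal.span_singleton_le_iff_mem _).2 hw)))
    exact Ideal.span_singleton_le_span_singleton.2 (dvd_mul_left v x)

theorem Ideal.colon_sup_span_mul_eq (hC' : C' = C ⊔ Ideal.span {w})
    (hQ : C.colon (Ideal.span {w}) = Q) (hQ_prime : Q.IsPrime)
    (hu : ∀ f, u * f ∈ C' → f ∈ C') (hv : v ∉ Q) (hxv : x * v ∣ u) :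
    (C ⊔ Ideal.span {u} ⊔ Ideal.span {x * v} * C').colon (Ideal.span {v * w}) =
      Q ⊔ Ideal.span {x} := by
  have hw : w ∈ C' := hC' ▸ Ideal.mem_sup_right (Ideal.mem_span_singleton_self w)
  have hcolon := Ideal.colon_sup_span_singleton_of_regular hC' hQ hu
  ext f
  rw [Ideal.mem_colon_span_singleton]
  constructor
  · intro hf
    obtain ⟨y, hy, z, hz, hyz⟩ := Submodule.mem_sup.1 hf
    obtain ⟨c, hc, rfl⟩ := Ideal.mem_span_singleton_mul.1 hz
    obtain ⟨g, hg⟩ := Ideal.mem_sup_span_singleton_iff.1 (hC' ▸ hc)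
    have h1 : f * v - g * (x * v) ∈ Q ⊔ Ideal.span {u} := hcolon ▸ by
      rw [Ideal.mem_colon_span_singleton,
        show (f * v - g * (x * v)) * w = y + x * v * (c - g * w) by linear_combination -hyz]
      exact add_mem hy (Ideal.mem_sup_left (Ideal.mul_mem_left _ _ hg))
    obtain ⟨b, hb⟩ := Ideal.mem_sup_span_singleton_iff.1 h1
    obtain ⟨a, rfl⟩ := hxv
    have h2 : v * (f - (g + b * a) * x) ∈ Q := by
      rw [show v * (f - (g + b * a) * x) = f * v - g * (x * v) - b * (x * v * a) by ring]
      exact hb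
    exact Ideal.mem_sup_span_singleton_iff.2 ⟨_, (hQ_prime.mem_or_mem h2).resolve_left hv⟩
  · intro hf
    obtain ⟨g, hg⟩ := Ideal.mem_sup_span_singleton_iff.1 hf
    rw [← hQ, Ideal.mem_colon_span_singleton] at hg
    rw [show f * (v * w) = v * ((f - g * x) * w) + x * v * (g * w) by ring]
    exact add_mem (Ideal.mem_sup_left (Ideal.mem_sup_left (Ideal.mul_mem_left _ _ hg)))
      (Ideal.mem_sup_right (Ideal.mem_span_singleton_mul.2 ⟨_, C'.mul_mem_left g hw, rfl⟩))

end Refinement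

namespace CyclicFiltration

variable {I : Ideal S} {F : CyclicFiltration I} {xs : List S} {q t : ℕ}

def refineIdeal (F : CyclicFiltration I) (xs : List S) (q t : ℕ) : Ideal S :=
  F.ideal q ⊔ Ideal.span {xs.prod} ⊔ Ideal.span {(xs.drop t).prod} * F.ideal (q + 1)

theorem refineIdeal_zero : F.refineIdeal xs q 0 = F.ideal q ⊔ Ideal.span {xs.prod} := by
  rw [refineIdeal, List.drop_zero]
  exact sup_eq_left.2 (Ideal.mul_le_left.trans le_sup_right)

theorem refineIdeal_length (hq : q < F.length) :
    F.refineIdeal xs q xs.length = F.ideal (q + 1) ⊔ Ideal.span {xs.prod} := by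
  rw [refineIdeal, List.drop_length, List.prod_nil, Ideal.span_singleton_one, Ideal.top_mul,
    sup_right_comm, sup_eq_right.2 (ideal_le_succ hq)]

theorem refineIdeal_succ (hq : q < F.length) (ht : t < xs.length) :
    F.refineIdeal xs q (t + 1) =
      F.refineIdeal xs q t ⊔ Ideal.span {(xs.drop (t + 1)).prod * F.gen q} := by
  rw [refineIdeal, refineIdeal, List.drop_eq_getElem_cons ht, List.prod_cons]
  exact Ideal.sup_span_singleton_mul_eq (F.ideal_succ q hq) le_sup_left

theorem colon_refineIdeal (hF : F.IsPrettyClean) (hu : ∀ f, xs.prod * f ∈ I → f ∈ I)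
    (hq : q < F.length) (ht : t < xs.length) :
    (F.refineIdeal xs q t).colon (Ideal.span {(xs.drop (t + 1)).prod * F.gen q}) =
      F.ann q ⊔ Ideal.span {xs[t]} := by
  have hdvd : ∀ i, (xs.drop i).prod ∣ xs.prod := fun i =>
    Dvd.intro_left _ (List.prod_take_mul_prod_drop xs i)
  have hxv := hdvd t
  rw [List.drop_eq_getElem_cons ht, List.prod_cons] at hxv
  rw [refineIdeal, List.drop_eq_getElem_cons ht, List.prod_cons]
  exact Ideal.colon_sup_span_mul_eq (F.ideal_succ q hq) (F.colon_gen q hq) (hF.1 q hq)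
    (F.regular_ideal hF hu hq) (F.notMem_ann_of_dvd hF hu hq (hdvd (t + 1))) hxv

/-- The refinement of `F` modulo `u = xs.prod`: step `k = q * xs.length + t` adds the generator
`(xs.drop (t + 1)).prod * gen q`, with annihilator `ann q ⊔ (xs[t])`. -/
noncomputable def refine (F : CyclicFiltration I) (hF : F.IsPrettyClean) (xs : List S)
    (hu : ∀ f, xs.prod * f ∈ I → f ∈ I) :
    CyclicFiltration (I ⊔ Ideal.span {xs.prod}) where
  length := F.length * xs.length
  ideal := fun k => F.refineIdeal xs (k / xs.length) (k % xs.length)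
  ann := fun k => F.ann (k / xs.length) ⊔ Ideal.span {xs.getD (k % xs.length) 0}
  gen := fun k => (xs.drop (k % xs.length + 1)).prod * F.gen (k / xs.length)
  ideal_zero := by rw [Nat.zero_div, Nat.zero_mod, refineIdeal_zero, F.ideal_zero]
  ideal_length := by
    rcases Nat.eq_zero_or_pos xs.length with hd | hd
    · simp [List.length_eq_zero_iff.1 hd, refineIdeal]
    · simp [Nat.mul_div_cancel _ hd, refineIdeal, F.ideal_length]
  ideal_succ := fun k hk => by
    have hd : 0 < xs.length := Nat.pos_of_mul_pos_left (Nat.zero_lt_of_lt hk)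
    have hq : k / xs.length < F.length := Nat.div_lt_of_lt_mul (by rwa [mul_comm])
    rw [Nat.apply_add_one_div_mod (T := F.refineIdeal xs)
      (by rw [refineIdeal_length hq, refineIdeal_zero]), refineIdeal_succ hq (Nat.mod_lt _ hd)]
  colon_gen := fun k hk => by
    have hd : 0 < xs.length := Nat.pos_of_mul_pos_left (Nat.zero_lt_of_lt hk)
    have ht := Nat.mod_lt k hd
    rw [colon_refineIdeal hF hu (Nat.div_lt_of_lt_mul (by rwa [mul_comm])) ht,
      List.getD_eq_getElem _ _ ht]

end CyclicFiltration

end CommRing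

section VarIdeals

open MvPolynomial

variable {σ R : Type*} [CommRing R]

theorem MvPolynomial.ker_aeval_ite_eq_span_X_image (s : Set σ) :
    RingHom.ker (aeval (fun i => if i ∈ s then 0 else X i) :
      MvPolynomial σ R →ₐ[R] MvPolynomial σ R) = Ideal.span (X '' s) := by
  set φ : MvPolynomial σ R →ₐ[R] MvPolynomial σ R :=
    aeval fun i => if i ∈ s then 0 else X i
  apply le_antisymm
  · have hsub : ∀ f, f - φ f ∈ Ideal.span (X '' s) := by
      intro f
      induction f using MvPolynomial.induction_on with
      | C a => simp [φ]
      | add p q hp hq => rw [map_add, add_sub_add_comm]; exact add_mem hp hq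
      | mul_X p i hp =>
        by_cases hi : i ∈ s
        · have hXi : (X i : MvPolynomial σ R) ∈ Ideal.span (X '' s) :=
            Ideal.subset_span ⟨i, hi, rfl⟩
          simpa [φ, hi] using Ideal.mul_mem_left _ p hXi
        · rw [map_mul, show φ (X i) = X i by simp [φ, hi], ← sub_mul]
          exact Ideal.mul_mem_right _ _ hp
    intro f hf
    simpa [RingHom.mem_ker.1 hf] using hsub f
  · rw [Ideal.span_le]
    rintro _ ⟨i, hi, rfl⟩
    simp [φ, hi]

theorem MvPolynomial.isPrime_span_X_image [IsDomain R] (s : Set σ) :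
    (Ideal.span (X '' s : Set (MvPolynomial σ R))).IsPrime :=
  ker_aeval_ite_eq_span_X_image (R := R) s ▸ RingHom.ker_isPrime _

theorem MvPolynomial.X_mem_span_X_image_iff [Nontrivial R] {s : Set σ} {a : σ} :
    (X a : MvPolynomial σ R) ∈ Ideal.span (X '' s) ↔ a ∈ s := by
  simp [mem_ideal_span_X_image, support_X, Finsupp.single_apply]

theorem MvPolynomial.span_X_image_le_iff [Nontrivial R] {s t : Set σ} :
    Ideal.span (X '' s : Set (MvPolynomial σ R)) ≤ Ideal.span (X '' t) ↔ s ⊆ t :=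
  ⟨fun h a ha => X_mem_span_X_image_iff.1 (h (Ideal.subset_span ⟨a, ha, rfl⟩)),
    fun h => Ideal.span_mono (Set.image_mono h)⟩

theorem MvPolynomial.span_X_image_sup_span_X (s : Set σ) (a : σ) :
    Ideal.span (X '' s : Set (MvPolynomial σ R)) ⊔ Ideal.span {X a} =
      Ideal.span (X '' insert a s) := by
  rw [Set.image_insert_eq, Ideal.span_insert, sup_comm]

variable {n : ℕ} {K : Type*} [Field K] {P P' : Ideal (MvPolynomial (Fin n) K)}

theorem IsVarIdeal.isPrime (hP : IsVarIdeal P) : P.IsPrime := by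
  obtain ⟨s, rfl⟩ := hP
  exact isPrime_span_X_image s

theorem IsVarIdeal.sup_span_X (hP : IsVarIdeal P) (a : Fin n) :
    IsVarIdeal (P ⊔ Ideal.span {X a}) := by
  obtain ⟨s, rfl⟩ := hP
  exact ⟨insert a s, span_X_image_sup_span_X s a⟩

theorem IsVarIdeal.le_and_eq_of_sup_span_X_le (hP : IsVarIdeal P) (hP' : IsVarIdeal P')
    {a b : Fin n} (ha : X a ∉ P') (hb : X b ∉ P)
    (h : P ⊔ Ideal.span {X a} ≤ P' ⊔ Ideal.span {X b}) : P ≤ P' ∧ a = b := by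
  obtain ⟨s, rfl⟩ := hP
  obtain ⟨s', rfl⟩ := hP'
  rw [span_X_image_sup_span_X, span_X_image_sup_span_X, span_X_image_le_iff] at h
  rw [X_mem_span_X_image_iff] at ha hb
  obtain rfl : a = b := (h (Set.mem_insert a s)).resolve_right ha
  refine ⟨span_X_image_le_iff.2 fun x hx => ?_, rfl⟩
  exact (h (Set.mem_insert_of_mem a hx)).resolve_left (by rintro rfl; exact hb hx)

end VarIdeals

section MonomialIdeals

open MvPolynomial

variable {n : ℕ} {K : Type*} [Field K] {I J : Ideal (MvPolynomial (Fin n) K)}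

theorem List.prod_map_X_eq_monomial {σ R : Type*} [CommSemiring R] (l : List σ) :
    (l.map X).prod = monomial (l.map fun i => Finsupp.single i 1).sum (1 : R) := by
  induction l with
  | nil => simp
  | cons a l ih => rw [List.map_cons, List.prod_cons, ih, X, monomial_mul, one_mul]; simp

theorem MvPolynomial.exists_list_prod_map_X_eq_monomial {σ R : Type*} [CommSemiring R]
    (m : σ →₀ ℕ) : ∃ l : List σ, (l.map X).prod = monomial m (1 : R) := by
  induction m using Finsupp.induction_linear with
  | zero => exact ⟨[], by simp⟩
  | add f g hf hg =>
    obtain ⟨l, hl⟩ := hf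
    obtain ⟨l', hl'⟩ := hg
    exact ⟨l ++ l', by rw [List.map_append, List.prod_append, hl, hl', monomial_mul, one_mul]⟩
  | single a k => exact ⟨List.replicate k a, by simp [X_pow_eq_monomial]⟩

theorem isMonomialIdeal_sup (hI : IsMonomialIdeal I) (hJ : IsMonomialIdeal J) :
    IsMonomialIdeal (I ⊔ J) := by
  obtain ⟨G, rfl⟩ := hI
  obtain ⟨G', rfl⟩ := hJ
  exact ⟨G ∪ G', by rw [idealOf, idealOf, idealOf, Set.image_union, Ideal.span_union]⟩

theorem isMonomialIdeal_top : IsMonomialIdeal (⊤ : Ideal (MvPolynomial (Fin n) K)) :=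
  ⟨{0}, by rw [idealOf, Set.image_singleton, monomial_zero', C_1, Ideal.span_singleton_one]⟩

theorem isMonomialIdeal_span_monomial (v : Mon n) :
    IsMonomialIdeal (Ideal.span {monomial v (1 : K)}) :=
  ⟨{v}, by rw [idealOf, Set.image_singleton]⟩

theorem IsMonomialIdeal.span_monomial_mul (hI : IsMonomialIdeal I) (v : Mon n) :
    IsMonomialIdeal (Ideal.span {monomial v (1 : K)} * I) := by
  obtain ⟨G, rfl⟩ := hI
  refine ⟨(v + ·) '' G, ?_⟩
  rw [idealOf, idealOf, Ideal.span_mul_span', Set.singleton_mul, Set.image_image, Set.image_image]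
  simp only [monomial_mul, one_mul]

end MonomialIdeals

namespace CyclicFiltration

open MvPolynomial

variable {n : ℕ} {K : Type*} [Field K] {I : Ideal (MvPolynomial (Fin n) K)}
  {F : CyclicFiltration I} (hF : F.IsPrettyClean) (l : List (Fin n))
  (hu : ∀ f, (l.map X).prod * f ∈ I → f ∈ I)

theorem isMonomialIdeal_refine_map_X (hmon : ∀ j ≤ F.length, IsMonomialIdeal (F.ideal j))
    {k : ℕ} (hk : k ≤ (F.refine hF (l.map X) hu).length) :
    IsMonomialIdeal ((F.refine hF (l.map X) hu).ideal k) := by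
  rcases hk.lt_or_eq with hk | rfl
  · have hq : k / (l.map X).length < F.length :=
      Nat.div_lt_of_lt_mul (hk.trans_eq (mul_comm _ _))
    change IsMonomialIdeal (F.refineIdeal _ _ _)
    rw [refineIdeal, ← List.map_drop, List.prod_map_X_eq_monomial, List.prod_map_X_eq_monomial]
    exact isMonomialIdeal_sup (isMonomialIdeal_sup (hmon _ hq.le)
      (isMonomialIdeal_span_monomial _)) ((hmon _ hq).span_monomial_mul _)
  · rw [ideal_length]
    exact isMonomialIdeal_top

theorem exists_ann_refine_map_X {k : ℕ} (hk : k < (F.refine hF (l.map X) hu).length) :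
    ∃ a ∈ l, k / l.length < F.length ∧
      (F.refine hF (l.map X) hu).ann k = F.ann (k / l.length) ⊔ Ideal.span {X a} := by
  have hk' : k < F.length * l.length := by simpa [refine] using hk
  have ht : k % l.length < l.length :=
    Nat.mod_lt _ (Nat.pos_of_mul_pos_left (Nat.zero_lt_of_lt hk'))
  refine ⟨l[k % l.length], List.getElem_mem ht, Nat.div_lt_of_lt_mul (by rwa [mul_comm]), ?_⟩
  have hd : (l.map (X : Fin n → MvPolynomial (Fin n) K)).length = l.length := List.length_map _
  change F.ann (k / (l.map X).length) ⊔
    Ideal.span {(l.map X).getD (k % (l.map X).length) 0} = _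
  rw [hd, List.getD_eq_getElem _ _ (hd ▸ ht), List.getElem_map]

theorem isPrettyClean_refine_map_X (hvar : ∀ j < F.length, IsVarIdeal (F.ann j)) :
    (F.refine hF (l.map X) hu).IsPrettyClean ∧
      ∀ k < (F.refine hF (l.map X) hu).length, IsVarIdeal ((F.refine hF (l.map X) hu).ann k) := by
  have hX : ∀ a ∈ l, ∀ q < F.length, X a ∉ F.ann q := fun a ha q hq =>
    F.notMem_ann_of_dvd hF hu hq (List.dvd_prod (List.mem_map_of_mem ha))
  have hvar' : ∀ k < (F.refine hF (l.map X) hu).length,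
      IsVarIdeal ((F.refine hF (l.map X) hu).ann k) := fun k hk => by
    obtain ⟨a, -, hq, hann⟩ := exists_ann_refine_map_X hF l hu hk
    exact hann ▸ (hvar _ hq).sup_span_X a
  refine ⟨⟨fun k hk => (hvar' k hk).isPrime, fun i j hij hj hle => ?_⟩, hvar'⟩
  obtain ⟨a, ha, hqi, hi⟩ := exists_ann_refine_map_X hF l hu (hij.trans hj)
  obtain ⟨b, hb, hqj, hj⟩ := exists_ann_refine_map_X hF l hu hj
  rw [hi, hj] at hle ⊢
  obtain ⟨hP, rfl⟩ := (hvar _ hqi).le_and_eq_of_sup_span_X_le (hvar _ hqj) (hX a ha _ hqj)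
    (hX b hb _ hqi) hle
  rcases (Nat.div_le_div_right (c := l.length) hij.le).lt_or_eq with hq | hq
  · rw [hF.2 _ _ hq hqj hP]
  · rw [hq]

end CyclicFiltration

theorem prettyClean_iff {n : ℕ} {K : Type*} [Field K] {I : Ideal (MvPolynomial (Fin n) K)} :
    PrettyClean I ↔ ∃ F : CyclicFiltration I, F.IsPrettyClean ∧
      (∀ j ≤ F.length, IsMonomialIdeal (F.ideal j)) ∧
        ∀ j < F.length, IsVarIdeal (F.ann j) := by
  constructor
  · rintro ⟨r, c, P, hc0, hctop, hmon, hle, hP, hiso, hpc⟩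
    choose w hw using fun j => (Ideal.nonempty_quotEquiv_iff (hle j)).1 (hiso j)
    refine ⟨{ length := r
              ideal := fun j => if h : j ≤ r then c ⟨j, by omega⟩ else ⊤
              ann := fun j => if h : j < r then P ⟨j, h⟩ else ⊤
              gen := fun j => if h : j < r then w ⟨j, h⟩ else 0
              ideal_zero := by simpa using hc0
              ideal_length := by rw [dif_pos le_rfl]; exact hctop
              ideal_succ := fun j hj => by simpa [hj, hj.le] using (hw ⟨j, hj⟩).1
              colon_gen := fun j hj => by simpa [hj, hj.le] using (hw ⟨j, hj⟩).2 },
      ⟨?_, ?_⟩, ?_, ?_⟩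
    · exact fun j hj => by simpa [hj] using (hP ⟨j, hj⟩).1
    · exact fun i j hij hj => by
        simpa [hj, hij.trans hj] using hpc ⟨i, hij.trans hj⟩ ⟨j, hj⟩ hij
    · exact fun j (hj : j ≤ r) => by simpa [hj] using hmon ⟨j, by omega⟩
    · exact fun j hj => by simpa [hj] using (hP ⟨j, hj⟩).2
  · rintro ⟨F, hF, hmon, hvar⟩
    exact ⟨F.length, fun j => F.ideal j, fun j => F.ann j, F.ideal_zero, F.ideal_length,
      fun j => hmon j (by omega), fun j => F.ideal_le_succ j.2,
      fun j => ⟨hF.1 j j.2, hvar j j.2⟩,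
      fun j => (Ideal.nonempty_quotEquiv_iff (F.ideal_le_succ j.2)).2
        ⟨F.gen j, F.ideal_succ j j.2, F.colon_gen j j.2⟩,
      fun i j hij => hF.2 i j hij j.2⟩

theorem prettyClean_add_regular_monomial_general {n : ℕ} {K : Type*} [Field K]
    (K₀ : Ideal (MvPolynomial (Fin n) K)) (m : Mon n)
    (hreg : ∀ f : MvPolynomial (Fin n) K,
      MvPolynomial.monomial m (1 : K) * f ∈ K₀ → f ∈ K₀)
    (h : PrettyClean K₀) :
    PrettyClean (K₀ ⊔ Ideal.span {MvPolynomial.monomial m (1 : K)}) := by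
  obtain ⟨F, hF, hmon, hvar⟩ := prettyClean_iff.1 h
  obtain ⟨l, hl⟩ := MvPolynomial.exists_list_prod_map_X_eq_monomial (R := K) m
  rw [← hl] at hreg ⊢
  obtain ⟨hF', hvar'⟩ := F.isPrettyClean_refine_map_X hF l hreg hvar
  exact prettyClean_iff.2 ⟨F.refine hF _ hreg, hF',
    fun _ => F.isMonomialIdeal_refine_map_X hF l hreg hmon, hvar'⟩

/-- If `K₀ ⊆ S` is a monomial ideal, `u` a monomial which is regular on `S/K₀`, and
`S/K₀` is pretty clean, then `S/(K₀, u)` is pretty clean. -/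
theorem prettyClean_add_regular_monomial {n : ℕ} {K : Type*} [Field K]
    (K₀ : Ideal (MvPolynomial (Fin n) K)) (hK : IsMonomialIdeal K₀) (m : Mon n)
    (hreg : ∀ f : MvPolynomial (Fin n) K,
      MvPolynomial.monomial m (1 : K) * f ∈ K₀ → f ∈ K₀)
    (h : PrettyClean K₀) :
    PrettyClean (K₀ ⊔ Ideal.span {MvPolynomial.monomial m (1 : K)}) :=
  prettyClean_add_regular_monomial_general K₀ m hreg h
end

section
/- Let I ⊂ S be a monomial ideal with G(I) = {u_1,...,u_{m−1}, ū_m x_j^t} where x_j is a free variable of I (x_j divides only the last generator) and x_j does not divide ū_m. If both minors I_{(∅,{x_j})} = (u_1,...,u_{m−1}, ū_m) and I_{({x_j},∅)} = (u_1,...,u_{m−1}) define pretty clean quotient rings, then S/I is pretty clean. -/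
attribute [local instance] Classical.propDecidable

/-!
A monomial ideal is encoded by a set of exponents, up to upper closure, and a pretty clean
filtration of `S/(G)` by a list of steps `(v, s)`: adjoin `x^v`, the colon ideal being generated by
the variables `x_i`, `i ∈ s`. Every monomial filtration with cyclic prime quotients is of this
form, because a subquotient `J/I ≅ S/P` of monomial ideals is generated by the only monomial of `J`
outside `I + 𝔪J`.

Setting `x_j = 1` turns the filtrations of `S/K`, `K = (u_1, …, u_{m-1})`, and of `S/J`,
`J = (u_1, …, u_{m-1}, ū_m)`, into filtrations whose steps avoid `x_j`. Taking the colon by `ū_m`,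
the first one yields a filtration of `S/(K : ū_m)`; replacing each of its steps `x^v` by the `t`
steps `ū_m x^v x_j^{t-1}, …, ū_m x^v`, with `x_j` added to the prime, leads from `I` to `J`. All
these primes contain `x_j` and those of the filtration of `S/J` do not, so the concatenation is a
pretty clean filtration of `S/I`.
-/

open MvPolynomial

section UpperClosure

variable {α β : Type*} [Preorder α] [Preorder β] {s t : Set α}

theorem upperClosure_eq_of_subset (hst : s ⊆ upperClosure t) (hts : t ⊆ upperClosure s) :
    upperClosure s = upperClosure t :=
  le_antisymm (le_upperClosure.2 hts) (le_upperClosure.2 hst)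

theorem upperClosure_insert_of_mem {a : α} (h : a ∈ upperClosure s) :
    upperClosure (insert a s) = upperClosure s :=
  upperClosure_eq_of_subset (Set.insert_subset h subset_upperClosure)
    fun _ hx => subset_upperClosure (Set.mem_insert_of_mem _ hx)

theorem upperClosure_insert_congr (h : upperClosure s = upperClosure t) (a : α) :
    upperClosure (insert a s) = upperClosure (insert a t) := by
  rw [Set.insert_eq, Set.insert_eq, upperClosure_union, upperClosure_union, h]

theorem image_subset_upperClosure_image {f : α → β} (hf : Monotone f)
    (h : t ⊆ upperClosure s) : f '' t ⊆ upperClosure (f '' s) := by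
  rintro _ ⟨b, hb, rfl⟩
  obtain ⟨a, ha, hab⟩ := mem_upperClosure.1 (h hb)
  exact ⟨f a, Set.mem_image_of_mem f ha, hf hab⟩

theorem upperClosure_image_congr {f : α → β} (hf : Monotone f)
    (h : upperClosure s = upperClosure t) : upperClosure (f '' s) = upperClosure (f '' t) :=
  upperClosure_eq_of_subset (image_subset_upperClosure_image hf (h ▸ subset_upperClosure))
    (image_subset_upperClosure_image hf (h ▸ subset_upperClosure))

theorem exists_le_notMem_upperClosure_union {α : Type*} [PartialOrder α] [WellFoundedLT α]
    {G H : Set α} {μ : α} (hμH : μ ∈ upperClosure H) (hμG : μ ∉ upperClosure G) :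
    ∃ ν ≤ μ, ν ∈ upperClosure H ∧ ν ∉ upperClosure (G ∪ {δ | ∃ γ ∈ H, γ < δ}) := by
  obtain ⟨ν, ⟨hνμ, hνH, hνG⟩, hmin⟩ :=
    wellFounded_lt.has_min {ν | ν ≤ μ ∧ ν ∈ upperClosure H ∧ ν ∉ upperClosure G}
      ⟨μ, le_rfl, hμH, hμG⟩
  refine ⟨ν, hνμ, hνH, ?_⟩
  rintro ⟨δ, hδ | ⟨γ, hγ, hγδ⟩, hδν⟩
  · exact hνG ⟨δ, hδ, hδν⟩
  · have hγν := hγδ.trans_le hδν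
    by_cases hγG : γ ∈ upperClosure G
    · exact hνG ((upperClosure G).upper hγν.le hγG)
    · exact hmin γ ⟨hγν.le.trans hνμ, subset_upperClosure hγ, hγG⟩ hγν

end UpperClosure

section Combinatorics

variable {n : ℕ}

/-- `(x^γ : γ ∈ G) : x^v = (x_i : i ∈ s)`. -/
def IsVarColon (G : Set (Mon n)) (v : Mon n) (s : Set (Fin n)) : Prop :=
  ∀ u : Mon n, u + v ∈ upperClosure G ↔ ∃ i ∈ s, u i ≠ 0

def IsPrimeFiltration : Set (Mon n) → List (Mon n × Set (Fin n)) → Set (Mon n) → Prop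
  | G, [], T => upperClosure G = upperClosure T
  | G, p :: L, T => IsVarColon G p.1 p.2 ∧ IsPrimeFiltration (insert p.1 G) L T

def PrettyOrdered (L : List (Mon n × Set (Fin n))) : Prop :=
  L.Pairwise fun p q => ¬ p.2 ⊂ q.2

variable {G G' T : Set (Mon n)} {v w : Mon n} {s : Set (Fin n)} {j : Fin n}

theorem IsVarColon.congr (h : upperClosure G = upperClosure G') (hc : IsVarColon G v s) :
    IsVarColon G' v s :=
  fun u => h ▸ hc u

theorem IsPrimeFiltration.congr : ∀ {L : List (Mon n × Set (Fin n))} {G G' T : Set (Mon n)},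
    upperClosure G = upperClosure G' → IsPrimeFiltration G L T → IsPrimeFiltration G' L T
  | [], _, _, _, h, hL => h.symm.trans hL
  | _ :: _, _, _, _, h, ⟨hc, hL⟩ => ⟨hc.congr h, hL.congr (upperClosure_insert_congr h _)⟩

theorem IsPrimeFiltration.congr_right : ∀ {L : List (Mon n × Set (Fin n))} {G T T' : Set (Mon n)},
    IsPrimeFiltration G L T → upperClosure T = upperClosure T' → IsPrimeFiltration G L T'
  | [], _, _, _, hL, h => hL.trans h
  | _ :: _, _, _, _, ⟨hc, hL⟩, h => ⟨hc, hL.congr_right h⟩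

theorem IsPrimeFiltration.append {L₂ : List (Mon n × Set (Fin n))} :
    ∀ {L₁ : List (Mon n × Set (Fin n))} {G T₁ : Set (Mon n)},
    IsPrimeFiltration G L₁ T₁ → IsPrimeFiltration T₁ L₂ T → IsPrimeFiltration G (L₁ ++ L₂) T
  | [], _, _, h₁, h₂ => h₂.congr h₁.symm
  | _ :: _, _, _, ⟨hc, h₁⟩, h₂ => ⟨hc, h₁.append h₂⟩

theorem PrettyOrdered.filterMap {L : List (Mon n × Set (Fin n))}
    {f : Mon n × Set (Fin n) → Option (Mon n × Set (Fin n))}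
    (hf : ∀ p q, f p = some q → q.2 = p.2) (hL : PrettyOrdered L) :
    PrettyOrdered (L.filterMap f) :=
  List.Pairwise.filterMap f (fun p p' h q hq q' hq' => by rwa [hf _ _ hq, hf _ _ hq']) hL

theorem monotone_erase (j : Fin n) : Monotone (Finsupp.erase j : Mon n → Mon n) :=
  fun u v h i => by
    simp only [Finsupp.erase_apply]
    split_ifs
    exacts [le_rfl, h i]

theorem erase_le_self (j : Fin n) (u : Mon n) : u.erase j ≤ u := fun i => by
  simp only [Finsupp.erase_apply]
  split_ifs <;> simp

/-- Setting `x_j = 1`. -/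
noncomputable def eraseStep (j : Fin n) (p : Mon n × Set (Fin n)) :
    Option (Mon n × Set (Fin n)) :=
  if j ∈ p.2 then none else some (p.1.erase j, p.2)

theorem eraseStep_eq_some {p q : Mon n × Set (Fin n)} :
    eraseStep j p = some q ↔ j ∉ p.2 ∧ q = (p.1.erase j, p.2) := by
  unfold eraseStep
  split_ifs with h <;> simp [h, eq_comm]

theorem IsVarColon.erase_mem (hc : IsVarColon G v s) (hj : j ∈ s) :
    v.erase j ∈ upperClosure (Finsupp.erase j '' G) := by
  obtain ⟨γ, hγ, hle⟩ := (hc (Finsupp.single j 1)).2 ⟨j, hj, by simp⟩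
  refine ⟨γ.erase j, Set.mem_image_of_mem _ hγ, ?_⟩
  simpa [Finsupp.erase_add] using monotone_erase j hle

theorem IsVarColon.erase (hc : IsVarColon G v s) (hj : j ∉ s) :
    IsVarColon (Finsupp.erase j '' G) (v.erase j) s := by
  intro u
  constructor
  · rintro ⟨_, ⟨γ, hγ, rfl⟩, hle⟩
    have hγle : γ ≤ u + Finsupp.single j (γ j) + v := fun i => by
      have := hle i
      simp only [Finsupp.erase_apply, Finsupp.add_apply, Finsupp.single_apply] at this ⊢
      split_ifs at this ⊢ <;> subst_vars <;> omega
    obtain ⟨i, hi, hne⟩ := (hc _).1 ⟨γ, hγ, hγle⟩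
    have hij : j ≠ i := fun h => hj (h ▸ hi)
    exact ⟨i, hi, by simpa [Finsupp.single_apply, hij] using hne⟩
  · intro h
    obtain ⟨γ, hγ, hle⟩ := (hc u).2 h
    refine ⟨γ.erase j, Set.mem_image_of_mem _ hγ, ?_⟩
    calc γ.erase j ≤ (u + v).erase j := monotone_erase j hle
      _ ≤ u + v.erase j := by
        rw [Finsupp.erase_add]; exact add_le_add (erase_le_self j u) le_rfl

theorem IsPrimeFiltration.erase (j : Fin n) :
    ∀ {L : List (Mon n × Set (Fin n))} {G T : Set (Mon n)}, IsPrimeFiltration G L T →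
    IsPrimeFiltration (Finsupp.erase j '' G) (L.filterMap (eraseStep j)) (Finsupp.erase j '' T)
  | [], _, _, h => upperClosure_image_congr (monotone_erase j) h
  | (v, s) :: L, G, T, ⟨hc, h⟩ => by
    by_cases hj : j ∈ s
    · rw [List.filterMap_cons_none (show eraseStep j (v, s) = none from if_pos hj)]
      refine (h.erase j).congr ?_
      rw [Set.image_insert_eq]
      exact upperClosure_insert_of_mem (hc.erase_mem hj)
    · rw [List.filterMap_cons_some (show eraseStep j (v, s) = some (v.erase j, s) from if_neg hj)]
      refine ⟨hc.erase hj, ?_⟩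
      simpa only [Set.image_insert_eq] using h.erase j

noncomputable def colonStep (w : Mon n) (p : Mon n × Set (Fin n)) :
    Option (Mon n × Set (Fin n)) :=
  if ∃ i ∈ p.2, (w - p.1) i ≠ 0 then none else some (p.1 - w, p.2)

theorem colonStep_eq_some {p q : Mon n × Set (Fin n)} :
    colonStep w p = some q ↔ (∀ i ∈ p.2, (w - p.1) i = 0) ∧ q = (p.1 - w, p.2) := by
  unfold colonStep
  split_ifs with h
  · obtain ⟨i, hi, hne⟩ := h
    simpa using fun h' _ => hne (h' i hi)
  · push Not at h
    exact ⟨fun hq => ⟨h, (Option.some_injective _ hq).symm⟩, fun ⟨_, hq⟩ => hq ▸ rfl⟩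

theorem mem_upperClosure_image_tsub {u : Mon n} :
    u ∈ upperClosure ((· - w) '' G) ↔ u + w ∈ upperClosure G := by
  simp only [mem_upperClosure, Set.exists_mem_image, tsub_le_iff_right]

theorem tsub_add_eq_tsub_add (v w : Mon n) : v - w + w = w - v + v := by
  ext i
  simp only [Finsupp.add_apply, Finsupp.tsub_apply]
  omega

theorem IsVarColon.tsub_mem (hc : IsVarColon G v s) (h : ∃ i ∈ s, (w - v) i ≠ 0) :
    v - w ∈ upperClosure ((· - w) '' G) := by
  rw [mem_upperClosure_image_tsub, tsub_add_eq_tsub_add]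
  exact (hc _).2 h

theorem IsVarColon.tsub (hc : IsVarColon G v s) (h : ∀ i ∈ s, (w - v) i = 0) :
    IsVarColon ((· - w) '' G) (v - w) s := by
  intro u
  rw [mem_upperClosure_image_tsub, add_assoc, tsub_add_eq_tsub_add, ← add_assoc, hc]
  exact exists_congr fun i => and_congr_right fun hi => by rw [Finsupp.add_apply, h i hi, add_zero]

theorem IsPrimeFiltration.tsub (w : Mon n) :
    ∀ {L : List (Mon n × Set (Fin n))} {G T : Set (Mon n)}, IsPrimeFiltration G L T →
    IsPrimeFiltration ((· - w) '' G) (L.filterMap (colonStep w)) ((· - w) '' T)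
  | [], _, _, h => upperClosure_image_congr (fun _ _ h => tsub_le_tsub_right h w) h
  | (v, s) :: L, G, T, ⟨hc, h⟩ => by
    by_cases hw : ∃ i ∈ s, (w - v) i ≠ 0
    · rw [List.filterMap_cons_none (show colonStep w (v, s) = none from if_pos hw)]
      refine (h.tsub w).congr ?_
      rw [Set.image_insert_eq]
      exact upperClosure_insert_of_mem (hc.tsub_mem hw)
    · rw [List.filterMap_cons_some (show colonStep w (v, s) = some (v - w, s) from if_neg hw)]
      push Not at hw
      refine ⟨hc.tsub hw, ?_⟩
      simpa only [Set.image_insert_eq] using h.tsub w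

noncomputable def blockSteps (j : Fin n) (v : Mon n) (s : Set (Fin n)) :
    ℕ → List (Mon n × Set (Fin n))
  | 0 => []
  | a + 1 => (v + Finsupp.single j a, insert j s) :: blockSteps j v s a

theorem snd_of_mem_blockSteps : ∀ {a : ℕ} {q : Mon n × Set (Fin n)},
    q ∈ blockSteps j v s a → q.2 = insert j s
  | a + 1, q, hq => by
    rcases List.mem_cons.1 hq with rfl | hq
    exacts [rfl, snd_of_mem_blockSteps hq]

section Block

variable {A : Set (Mon n)} {t : ℕ}

theorem isVarColon_blockStep (htop : v + Finsupp.single j t ∈ upperClosure A)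
    (hcol : ∀ u : Mon n, u j = 0 → ∀ b < t,
      (u + (v + Finsupp.single j b) ∈ upperClosure A ↔ ∃ i ∈ s, u i ≠ 0))
    {a : ℕ} (ha : a < t) :
    IsVarColon (A ∪ (fun b => v + Finsupp.single j b) '' Set.Ico (a + 1) t)
      (v + Finsupp.single j a) (insert j s) := by
  intro u
  rw [upperClosure_union, UpperSet.mem_inf_iff]
  by_cases hu : u j = 0
  · have hs : (∃ i ∈ insert j s, u i ≠ 0) ↔ ∃ i ∈ s, u i ≠ 0 := by
      simp [hu]
    rw [hs, ← hcol u hu a ha, or_iff_left_iff_imp]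
    rintro ⟨_, ⟨b, hb, rfl⟩, hle⟩
    have hj := hle j
    simp only [Finsupp.add_apply, Finsupp.single_eq_same] at hj
    have := hb.1
    omega
  · refine iff_of_true ?_ ⟨j, Set.mem_insert _ _, hu⟩
    have hle : v + Finsupp.single j (a + 1) ≤ u + (v + Finsupp.single j a) := fun i => by
      by_cases hij : j = i
      · subst hij; simp; omega
      · simp [hij]
    rcases (Nat.succ_le_of_lt ha).lt_or_eq with hlt | rfl
    · exact Or.inr ⟨_, ⟨a + 1, ⟨le_rfl, hlt⟩, rfl⟩, hle⟩
    · exact Or.inl ((upperClosure A).upper hle htop)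

theorem isPrimeFiltration_blockSteps (htop : v + Finsupp.single j t ∈ upperClosure A)
    (hcol : ∀ u : Mon n, u j = 0 → ∀ b < t,
      (u + (v + Finsupp.single j b) ∈ upperClosure A ↔ ∃ i ∈ s, u i ≠ 0)) :
    IsPrimeFiltration A (blockSteps j v s t) (insert v A) := by
  suffices ∀ a ≤ t, IsPrimeFiltration (A ∪ (fun b => v + Finsupp.single j b) '' Set.Ico a t)
      (blockSteps j v s a) (insert v A) by
    simpa using this t le_rfl
  intro a
  induction a with
  | zero =>
    intro _
    refine upperClosure_eq_of_subset ?_ ?_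
    · rintro _ (hγ | ⟨b, -, rfl⟩)
      exacts [subset_upperClosure (Set.mem_insert_of_mem _ hγ),
        ⟨v, Set.mem_insert _ _, le_self_add⟩]
    · rintro _ (rfl | hγ)
      · rcases Nat.eq_zero_or_pos t with rfl | ht
        · obtain ⟨γ, hγ, hle⟩ := mem_upperClosure.1 htop
          exact ⟨γ, Or.inl hγ, by simpa using hle⟩
        · exact subset_upperClosure (Or.inr ⟨0, ⟨le_rfl, ht⟩, by simp⟩)
      · exact subset_upperClosure (Or.inl hγ)
  | succ a ih =>
    intro ha
    refine ⟨isVarColon_blockStep htop hcol ha, ?_⟩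
    have hIco : Set.Ico a t = insert a (Set.Ico (a + 1) t) := by
      ext b; simp only [Set.mem_Ico, Set.mem_insert_iff]; omega
    have := ih (Nat.le_of_succ_le ha)
    rwa [hIco, Set.image_insert_eq, Set.union_insert] at this

end Block

section FlatMap

variable {F : Set (Mon n)} {t : ℕ}

theorem IsVarColon.add_blockStep_mem_iff (hc : IsVarColon G v s)
    (hF : ∀ γ ∈ F, γ j = 0 ∧ γ - w ∈ upperClosure G) (hG : ∀ γ ∈ G, γ j = 0) (hv : v j = 0)
    {u : Mon n} (hu : u j = 0) {b : ℕ} (hb : b < t) :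
    u + (w + v + Finsupp.single j b) ∈
        upperClosure (insert (w + Finsupp.single j t) F ∪ (w + ·) '' G) ↔
      ∃ i ∈ s, u i ≠ 0 := by
  rw [← hc u]
  constructor
  · rintro ⟨γ, (rfl | hγ) | ⟨γ, hγ, rfl⟩, hle⟩
    · have hj := hle j
      simp only [Finsupp.add_apply, Finsupp.single_eq_same] at hj
      omega
    · refine (upperClosure G).upper (fun i => ?_) (hF γ hγ).2
      have hi := hle i
      have hγj := (hF γ hγ).1
      by_cases hij : j = i
      · subst hij; simp [hγj]
      · simp only [Finsupp.add_apply, Finsupp.tsub_apply, Finsupp.single_apply, if_neg hij] at hi ⊢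
        omega
    · refine ⟨γ, hγ, fun i => ?_⟩
      have hi := hle i
      by_cases hij : j = i
      · subst hij; simp [hG γ hγ]
      · simp only [Finsupp.add_apply, Finsupp.single_apply, if_neg hij] at hi ⊢
        omega
  · rintro ⟨γ, hγ, hle⟩
    refine ⟨w + γ, Or.inr ⟨γ, hγ, rfl⟩, fun i => ?_⟩
    have hi := hle i
    simp only [Finsupp.add_apply] at hi ⊢
    omega

theorem IsPrimeFiltration.flatMap_blockSteps : ∀ {L : List (Mon n × Set (Fin n))} {G : Set (Mon n)},
    (∀ γ ∈ F, γ j = 0 ∧ γ - w ∈ upperClosure G) → (∀ γ ∈ G, γ j = 0) →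
    (∀ p ∈ L, p.1 j = 0) → IsPrimeFiltration G L T →
    IsPrimeFiltration (insert (w + Finsupp.single j t) F ∪ (w + ·) '' G)
      (L.flatMap fun p => blockSteps j (w + p.1) p.2 t)
      (insert (w + Finsupp.single j t) F ∪ (w + ·) '' T)
  | [], _, _, _, _, h => by
    rw [List.flatMap_nil, IsPrimeFiltration, upperClosure_union, upperClosure_union,
      upperClosure_image_congr (fun _ _ h => add_le_add le_rfl h) h]
  | (v, s) :: L, G, hF, hG, hL, ⟨hc, h⟩ => by
    have hv : v j = 0 := hL _ List.mem_cons_self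
    have htop : w + v + Finsupp.single j t ∈
        upperClosure (insert (w + Finsupp.single j t) F ∪ (w + ·) '' G) :=
      ⟨_, Or.inl (Set.mem_insert _ _), by rw [add_right_comm]; exact le_self_add⟩
    have hF' : ∀ γ ∈ F, γ j = 0 ∧ γ - w ∈ upperClosure (insert v G) := fun γ hγ => by
      obtain ⟨hγj, δ, hδ, hle⟩ := hF γ hγ
      exact ⟨hγj, δ, Set.mem_insert_of_mem _ hδ, hle⟩
    have hG' : ∀ γ ∈ insert v G, γ j = 0 := by
      rintro γ (rfl | hγ)
      exacts [hv, hG γ hγ]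
    have h' := IsPrimeFiltration.flatMap_blockSteps hF' hG'
      (fun p hp => hL p (List.mem_cons_of_mem _ hp)) h
    rw [Set.image_insert_eq, Set.union_insert] at h'
    exact (isPrimeFiltration_blockSteps htop
      fun u hu b hb => hc.add_blockStep_mem_iff hF hG hv hu hb).append h'

theorem PrettyOrdered.flatMap_blockSteps {L : List (Mon n × Set (Fin n))} (hL : PrettyOrdered L)
    (hj : ∀ p ∈ L, j ∉ p.2) :
    PrettyOrdered (L.flatMap fun p => blockSteps j (w + p.1) p.2 t) := by
  refine List.pairwise_flatMap.2 ⟨fun p _ => List.pairwise_of_forall_mem_list fun x hx y hy => ?_,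
    hL.imp_of_mem fun {p q} hp hq hpq x hx y hy => ?_⟩
  · rw [snd_of_mem_blockSteps hx, snd_of_mem_blockSteps hy]
    exact ssubset_irrefl _
  · rw [snd_of_mem_blockSteps hx, snd_of_mem_blockSteps hy, ssubset_iff_subset_not_subset,
      Set.insert_subset_insert_iff (hj p hp), Set.insert_subset_insert_iff (hj q hq),
      ← ssubset_iff_subset_not_subset]
    exact hpq

end FlatMap

theorem exists_isPrimeFiltration_avoiding (hG : ∀ γ ∈ G, γ j = 0)
    (h : ∃ L, IsPrimeFiltration G L {0} ∧ PrettyOrdered L) :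
    ∃ L, IsPrimeFiltration G L {0} ∧ PrettyOrdered L ∧ ∀ p ∈ L, p.1 j = 0 ∧ j ∉ p.2 := by
  obtain ⟨L, hL, ho⟩ := h
  have hGerase : Finsupp.erase j '' G = G := by
    refine (Set.image_congr fun γ hγ => ?_).trans (Set.image_id G)
    exact Finsupp.erase_of_notMem_support (by simpa using hG γ hγ)
  refine ⟨L.filterMap (eraseStep j), ?_, ho.filterMap fun p q hq => ?_, fun q hq => ?_⟩
  · simpa [hGerase] using hL.erase j
  · rw [(eraseStep_eq_some.1 hq).2]
  · obtain ⟨p, -, hpq⟩ := List.mem_filterMap.1 hq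
    obtain ⟨hj, rfl⟩ := eraseStep_eq_some.1 hpq
    exact ⟨by simp, hj⟩

theorem exists_isPrimeFiltration_to_insert {GK : Set (Mon n)} {t : ℕ}
    {LK : List (Mon n × Set (Fin n))} (hGK : ∀ γ ∈ GK, γ j = 0)
    (hK : IsPrimeFiltration GK LK {0}) (hKo : PrettyOrdered LK)
    (hKj : ∀ p ∈ LK, p.1 j = 0 ∧ j ∉ p.2) :
    ∃ L, IsPrimeFiltration (insert (w + Finsupp.single j t) GK) L (insert w GK) ∧
      PrettyOrdered L ∧ ∀ p ∈ L, j ∈ p.2 := by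
  have hC : IsPrimeFiltration ((· - w) '' GK) (LK.filterMap (colonStep w)) {0} := by
    simpa using hK.tsub w
  have hCj : ∀ q ∈ LK.filterMap (colonStep w), q.1 j = 0 ∧ j ∉ q.2 := fun q hq => by
    obtain ⟨p, hp, hpq⟩ := List.mem_filterMap.1 hq
    obtain ⟨-, rfl⟩ := colonStep_eq_some.1 hpq
    exact ⟨by simp [(hKj p hp).1], (hKj p hp).2⟩
  have hB := hC.flatMap_blockSteps (F := GK) (w := w) (t := t)
    (fun γ hγ => ⟨hGK γ hγ, subset_upperClosure (Set.mem_image_of_mem _ hγ)⟩)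
    (by rintro _ ⟨γ, hγ, rfl⟩; simp [hGK γ hγ]) fun q hq => (hCj q hq).1
  refine ⟨_, (hB.congr ?_).congr_right ?_,
    (hKo.filterMap fun p q hq => by rw [(colonStep_eq_some.1 hq).2]).flatMap_blockSteps
      fun q hq => (hCj q hq).2, fun q hq => ?_⟩
  · refine upperClosure_eq_of_subset ?_ fun γ hγ => subset_upperClosure (Or.inl hγ)
    rintro _ (hγ | ⟨_, ⟨γ, hγ, rfl⟩, rfl⟩)
    exacts [subset_upperClosure hγ, ⟨γ, Set.mem_insert_of_mem _ hγ, le_add_tsub⟩]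
  · refine upperClosure_eq_of_subset ?_ ?_
    · rintro _ ((rfl | hγ) | ⟨_, rfl, rfl⟩)
      exacts [⟨w, Set.mem_insert _ _, le_self_add⟩,
        subset_upperClosure (Set.mem_insert_of_mem _ hγ), ⟨w, Set.mem_insert _ _, by simp⟩]
    · rintro γ (hγ | hγ)
      · rw [hγ]
        exact ⟨w + 0, Or.inr ⟨0, rfl, rfl⟩, by simp⟩
      · exact subset_upperClosure (Or.inl (Set.mem_insert_of_mem _ hγ))
  · obtain ⟨p, -, hqp⟩ := List.mem_flatMap.1 hq
    exact snd_of_mem_blockSteps hqp ▸ Set.mem_insert _ _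

theorem exists_isPrimeFiltration_insert_add_single {GK : Set (Mon n)} {t : ℕ}
    {LK LJ : List (Mon n × Set (Fin n))} (hGK : ∀ γ ∈ GK, γ j = 0)
    (hK : IsPrimeFiltration GK LK {0}) (hKo : PrettyOrdered LK)
    (hKj : ∀ p ∈ LK, p.1 j = 0 ∧ j ∉ p.2)
    (hJ : IsPrimeFiltration (insert w GK) LJ {0}) (hJo : PrettyOrdered LJ)
    (hJj : ∀ p ∈ LJ, j ∉ p.2) :
    ∃ L, IsPrimeFiltration (insert (w + Finsupp.single j t) GK) L {0} ∧ PrettyOrdered L := by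
  obtain ⟨LB, hB, hBo, hBj⟩ := exists_isPrimeFiltration_to_insert (t := t) hGK hK hKo hKj
  exact ⟨_, hB.append hJ, List.pairwise_append.2
    ⟨hBo, hJo, fun a ha b hb hab => hJj b hb (hab.1 (hBj a ha))⟩⟩

def insertSteps (G : Set (Mon n)) (L : List (Mon n × Set (Fin n))) : Set (Mon n) :=
  L.foldl (fun G p => insert p.1 G) G

theorem insertSteps_take_succ : ∀ (L : List (Mon n × Set (Fin n))) (G : Set (Mon n)) (k : ℕ)
    (hk : k < L.length), insertSteps G (L.take (k + 1)) = insert L[k].1 (insertSteps G (L.take k))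
  | _ :: _, _, 0, _ => rfl
  | p :: L, G, k + 1, hk => insertSteps_take_succ L (insert p.1 G) k (by simpa using hk)

theorem IsPrimeFiltration.upperClosure_insertSteps :
    ∀ {L : List (Mon n × Set (Fin n))} {G T : Set (Mon n)}, IsPrimeFiltration G L T →
    upperClosure (insertSteps G L) = upperClosure T
  | [], _, _, h => h
  | _ :: _, _, _, h => h.2.upperClosure_insertSteps

theorem IsPrimeFiltration.isVarColon_getElem :
    ∀ {L : List (Mon n × Set (Fin n))} {G T : Set (Mon n)}, IsPrimeFiltration G L T →
    ∀ (k : ℕ) (hk : k < L.length), IsVarColon (insertSteps G (L.take k)) L[k].1 L[k].2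
  | _ :: _, _, _, h, 0, _ => h.1
  | _ :: _, _, _, h, k + 1, hk => h.2.isVarColon_getElem k (by simpa using hk)

end Combinatorics

section QuotientModule

variable {R : Type*} [CommRing R]

abbrev subquotient (I J : Ideal R) : Type _ := ↥J ⧸ Submodule.comap J.subtype I

theorem nonempty_linearEquiv_of_colon {I P : Ideal R} {x : R} (h : ∀ f, f * x ∈ I ↔ f ∈ P) :
    Nonempty (subquotient I (I ⊔ Ideal.span {x}) ≃ₗ[R] R ⧸ P) := by
  set J := I ⊔ Ideal.span {x}
  have hx : x ∈ J := Ideal.mem_sup_right (Ideal.mem_span_singleton_self x)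
  let φ : R →ₗ[R] subquotient I J :=
    (Submodule.mkQ _).comp (LinearMap.toSpanSingleton R ↥J ⟨x, hx⟩)
  have hker : LinearMap.ker φ = P := by
    ext f
    simp [φ, Submodule.Quotient.mk_eq_zero, h]
  have hsurj : Function.Surjective φ := by
    intro q
    obtain ⟨⟨y, hy⟩, rfl⟩ := Submodule.Quotient.mk_surjective _ q
    obtain ⟨a, b, hb, rfl⟩ :=
      Ideal.mem_span_singleton_sup.1 (by rwa [sup_comm] : y ∈ Ideal.span {x} ⊔ I)
    refine ⟨a, (Submodule.Quotient.eq _).2 ?_⟩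
    simpa [J] using neg_mem hb
  exact ⟨(φ.quotKerEquivOfSurjective hsurj).symm.trans (Submodule.quotEquivOfEq _ _ hker)⟩

theorem smul_eq_zero_iff_mem_of_linearEquiv {M : Type*} [AddCommGroup M] [Module R M]
    {P : Ideal R} [P.IsPrime] (ψ : M ≃ₗ[R] R ⧸ P) {x : M} (hx : x ≠ 0) (f : R) :
    f • x = 0 ↔ f ∈ P := by
  obtain ⟨r, hr⟩ := Ideal.Quotient.mk_surjective (ψ x)
  have hrP : r ∉ P := fun h => hx (ψ.map_eq_zero_iff.1 (hr ▸ Ideal.Quotient.eq_zero_iff_mem.2 h))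
  rw [← ψ.map_eq_zero_iff, map_smul, ← hr,
    show f • Ideal.Quotient.mk P r = Ideal.Quotient.mk P (f * r) from rfl,
    Ideal.Quotient.eq_zero_iff_mem, Ideal.IsPrime.mul_mem_right_iff hrP]

theorem mem_sup_mul_of_linearEquiv {I J P 𝔪 : Ideal R} (ψ : subquotient I J ≃ₗ[R] R ⧸ P) (y : ↥J)
    (h : ψ (Submodule.Quotient.mk y) ∈ 𝔪 • (⊤ : Submodule R (R ⧸ P))) :
    (y : R) ∈ I ⊔ 𝔪 * J := by
  have h₁ : Submodule.Quotient.mk y ∈ 𝔪 • (⊤ : Submodule R (subquotient I J)) := by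
    have := Submodule.mem_map_of_mem (f := ψ.symm.toLinearMap) h
    rwa [Submodule.map_smul'', Submodule.map_top, LinearEquiv.range, LinearEquiv.coe_coe,
      ψ.symm_apply_apply] at this
  rw [← Submodule.range_mkQ, ← Submodule.map_top, ← Submodule.map_smul''] at h₁
  obtain ⟨z, hz, hzy⟩ := h₁
  rw [Submodule.mkQ_apply, Submodule.Quotient.eq] at hzy
  have hzJ : (z : R) ∈ 𝔪 * J := by
    have := Submodule.mem_map_of_mem (f := J.subtype) hz
    rwa [Submodule.map_smul'', Submodule.map_top, Submodule.range_subtype, smul_eq_mul] at this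
  rw [show (y : R) = z - (z - y : ↥J) by simp]
  exact sub_mem (Ideal.mem_sup_right hzJ) (Ideal.mem_sup_left hzy)

end QuotientModule

section MonomialIdeal

variable {n : ℕ} {K : Type*} [Field K] {G H T : Set (Mon n)}

theorem mem_idealOf {p : MvPolynomial (Fin n) K} :
    p ∈ idealOf K G ↔ ∀ u ∈ p.support, u ∈ upperClosure G :=
  mem_ideal_span_monomial_image

theorem monomial_mem_idealOf {u : Mon n} :
    monomial u (1 : K) ∈ idealOf K G ↔ u ∈ upperClosure G := by
  simp [mem_idealOf, support_monomial]

theorem idealOf_mono (h : G ⊆ H) : idealOf K G ≤ idealOf K H :=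
  Ideal.span_mono (Set.image_mono h)

theorem idealOf_eq_idealOf_iff : idealOf K G = idealOf K T ↔ upperClosure G = upperClosure T := by
  refine ⟨fun h => SetLike.ext fun u => ?_, fun h => Ideal.ext fun p => ?_⟩
  · rw [← monomial_mem_idealOf (K := K), h, monomial_mem_idealOf]
  · rw [mem_idealOf, mem_idealOf, h]

theorem idealOf_singleton_zero : idealOf K ({0} : Set (Mon n)) = ⊤ := by
  simp [idealOf]

theorem idealOf_insert (v : Mon n) :
    idealOf K (insert v G) = idealOf K G ⊔ Ideal.span {monomial v 1} := by
  rw [idealOf, Set.image_insert_eq, Ideal.span_insert, sup_comm]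
  rfl

noncomputable def varIdeal (K : Type*) [Field K] (s : Set (Fin n)) :
    Ideal (MvPolynomial (Fin n) K) :=
  Ideal.span (X '' s)

theorem monomial_mem_varIdeal {u : Mon n} {s : Set (Fin n)} :
    monomial u (1 : K) ∈ varIdeal K s ↔ ∃ i ∈ s, u i ≠ 0 := by
  simp [varIdeal, mem_ideal_span_X_image, support_monomial]

theorem varIdeal_le_varIdeal_iff {s s' : Set (Fin n)} :
    varIdeal K s ≤ varIdeal K s' ↔ s ⊆ s' := by
  refine ⟨fun h i hi => ?_, fun h => Ideal.span_mono (Set.image_mono h)⟩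
  obtain ⟨i', hi', hne⟩ := monomial_mem_varIdeal.1 (h (Ideal.subset_span ⟨i, hi, rfl⟩))
  rw [Finsupp.single_apply, ite_ne_right_iff] at hne
  exact hne.1 ▸ hi'

theorem mem_varIdeal_univ {r : MvPolynomial (Fin n) K} (hr : constantCoeff r = 0) :
    r ∈ varIdeal K Set.univ := by
  refine mem_ideal_span_X_image.2 fun u hu => ?_
  obtain ⟨i, hi⟩ := Finsupp.ne_iff.1 (show u ≠ 0 by rintro rfl; exact mem_support_iff.1 hu hr)
  exact ⟨i, Set.mem_univ i, hi⟩

theorem varIdeal_eq_ker (s : Set (Fin n)) :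
    varIdeal K s = RingHom.ker (aeval fun i => if i ∈ s then 0 else X i :
      MvPolynomial (Fin n) K →ₐ[K] MvPolynomial (Fin n) K) := by
  set φ : MvPolynomial (Fin n) K →ₐ[K] MvPolynomial (Fin n) K :=
    aeval fun i => if i ∈ s then 0 else X i
  have hsub : ∀ p, p - φ p ∈ varIdeal K s := by
    intro p
    induction p using MvPolynomial.induction_on with
    | C a => simp
    | add p q hp hq => simpa [sub_add_sub_comm] using add_mem hp hq
    | mul_X p i hp =>
      by_cases hi : i ∈ s
      · simpa [φ, hi] using
          Ideal.mul_mem_left (varIdeal K s) p (Ideal.subset_span (Set.mem_image_of_mem X hi))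
      · simpa [φ, hi, sub_mul] using Ideal.mul_mem_right (X i) _ hp
  refine le_antisymm (Ideal.span_le.2 ?_) fun p hp => ?_
  · rintro _ ⟨i, hi, rfl⟩
    simp [φ, hi]
  · simpa [RingHom.mem_ker.1 hp] using hsub p

theorem varIdeal_isPrime (s : Set (Fin n)) : (varIdeal K s).IsPrime := by
  rw [varIdeal_eq_ker]
  exact RingHom.ker_isPrime _

end MonomialIdeal

section Extraction

variable {n : ℕ} {K : Type*} [Field K] {G H : Set (Mon n)} {P : Ideal (MvPolynomial (Fin n) K)}

theorem varIdeal_univ_mul_idealOf_le :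
    varIdeal K Set.univ * idealOf K H ≤ idealOf K {δ | ∃ γ ∈ H, γ < δ} := by
  rw [varIdeal, idealOf, Ideal.span_mul_span', Ideal.span_le]
  rintro _ ⟨_, ⟨i, -, rfl⟩, _, ⟨γ, hγ, rfl⟩, rfl⟩
  show monomial (Finsupp.single i 1) (1 : K) * monomial γ 1 ∈ idealOf K _
  rw [monomial_mul, one_mul]
  refine monomial_mem_idealOf.2 (subset_upperClosure ⟨γ, hγ, ?_⟩)
  exact lt_add_of_pos_left γ (by simp [pos_iff_ne_zero])

theorem mem_idealOf_of_linearEquiv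
    (ψ : subquotient (idealOf K G) (idealOf K H) ≃ₗ[MvPolynomial (Fin n) K]
      MvPolynomial (Fin n) K ⧸ P)
    (y : ↥(idealOf K H)) {r : MvPolynomial (Fin n) K}
    (hr : constantCoeff r = 0) (hψ : ψ (Submodule.Quotient.mk y) = Ideal.Quotient.mk P r) :
    (y : MvPolynomial (Fin n) K) ∈ idealOf K (G ∪ {δ | ∃ γ ∈ H, γ < δ}) := by
  have hm : ψ (Submodule.Quotient.mk y) ∈ varIdeal K (Set.univ : Set (Fin n)) •
      (⊤ : Submodule (MvPolynomial (Fin n) K) (MvPolynomial (Fin n) K ⧸ P)) := by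
    rw [hψ, show Ideal.Quotient.mk P r = r • Ideal.Quotient.mk P 1 from
      congrArg _ (mul_one r).symm]
    exact Submodule.smul_mem_smul (mem_varIdeal_univ hr) Submodule.mem_top
  exact sup_le (idealOf_mono Set.subset_union_left)
    (varIdeal_univ_mul_idealOf_le.trans (idealOf_mono Set.subset_union_right))
    (mem_sup_mul_of_linearEquiv ψ y hm)

/-- `(I + 𝔪J)/I ≅ 𝔪(S/P)`, so `J/(I + 𝔪J)` is one-dimensional. -/
theorem eq_of_notMem_of_linearEquiv
    (ψ : subquotient (idealOf K G) (idealOf K H) ≃ₗ[MvPolynomial (Fin n) K]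
      MvPolynomial (Fin n) K ⧸ P)
    {v ν : Mon n} (hv : v ∈ upperClosure H) (hν : ν ∈ upperClosure H)
    (hvE : v ∉ upperClosure (G ∪ {δ | ∃ γ ∈ H, γ < δ}))
    (hνE : ν ∉ upperClosure (G ∪ {δ | ∃ γ ∈ H, γ < δ})) : v = ν := by
  by_contra hne
  set xv : ↥(idealOf K H) := ⟨monomial v 1, monomial_mem_idealOf.2 hv⟩
  set xν : ↥(idealOf K H) := ⟨monomial ν 1, monomial_mem_idealOf.2 hν⟩
  obtain ⟨rv, hrv⟩ := Ideal.Quotient.mk_surjective (ψ (Submodule.Quotient.mk xv))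
  obtain ⟨rν, hrν⟩ := Ideal.Quotient.mk_surjective (ψ (Submodule.Quotient.mk xν))
  have ha : constantCoeff rν ≠ 0 := fun h =>
    hνE (monomial_mem_idealOf.1 (mem_idealOf_of_linearEquiv ψ xν h hrν.symm))
  -- this combination kills the constant coefficient of its image, but not its `x^v`-coefficient
  have hy := mem_idealOf_of_linearEquiv ψ
    ((C (constantCoeff rν) : MvPolynomial (Fin n) K) • xv -
      (C (constantCoeff rv) : MvPolynomial (Fin n) K) • xν)
    (r := C (constantCoeff rν) * rv - C (constantCoeff rv) * rν) (by simp [mul_comm]) (by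
      rw [Submodule.Quotient.mk_sub, Submodule.Quotient.mk_smul, Submodule.Quotient.mk_smul,
        map_sub, map_smul, map_smul, ← hrv, ← hrν]
      rfl)
  refine hvE (mem_idealOf.1 hy v ?_)
  simp [xv, xν, coeff_C_mul, coeff_monomial, Ne.symm hne, ha]

theorem exists_eq_sup_monomial_of_linearEquiv [P.IsPrime] (hle : idealOf K G ≤ idealOf K H)
    (hψ : Nonempty (subquotient (idealOf K G) (idealOf K H) ≃ₗ[MvPolynomial (Fin n) K]
      MvPolynomial (Fin n) K ⧸ P)) :
    ∃ v, idealOf K H = idealOf K G ⊔ Ideal.span {monomial v 1} ∧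
      ∀ f, f * monomial v 1 ∈ idealOf K G ↔ f ∈ P := by
  obtain ⟨ψ⟩ := hψ
  have hGH : G ⊆ upperClosure H := fun γ hγ =>
    monomial_mem_idealOf.1 (hle (monomial_mem_idealOf.2 (subset_upperClosure hγ)))
  obtain ⟨μ, hμH, hμG⟩ : ∃ μ ∈ upperClosure H, μ ∉ upperClosure G := by
    by_contra! h
    have htop : Submodule.comap (idealOf K H).subtype (idealOf K G) = ⊤ :=
      eq_top_iff.2 fun y _ => mem_idealOf.2 fun u hu => h u (mem_idealOf.1 y.2 u hu)
    have := Submodule.Quotient.subsingleton_iff.2 htop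
    exact not_subsingleton _ ψ.symm.toEquiv.subsingleton
  obtain ⟨v, -, hvH, hvE⟩ := exists_le_notMem_upperClosure_union hμH hμG
  have hvG : v ∉ upperClosure G := fun ⟨γ, hγ, hγv⟩ => hvE ⟨γ, Or.inl hγ, hγv⟩
  refine ⟨v, ?_, fun f => ?_⟩
  · rw [← idealOf_insert, idealOf_eq_idealOf_iff]
    refine upperClosure_eq_of_subset (fun μ hμ => ?_) (Set.insert_subset hvH hGH)
    by_cases hμG : μ ∈ upperClosure G
    · obtain ⟨γ, hγ, hγμ⟩ := hμG
      exact ⟨γ, Set.mem_insert_of_mem _ hγ, hγμ⟩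
    · obtain ⟨ν, hνμ, hνH, hνE⟩ :=
        exists_le_notMem_upperClosure_union (subset_upperClosure hμ) hμG
      exact ⟨v, Set.mem_insert _ _, eq_of_notMem_of_linearEquiv ψ hvH hνH hvE hνE ▸ hνμ⟩
  · have hx : (Submodule.Quotient.mk ⟨monomial v 1, monomial_mem_idealOf.2 hvH⟩ :
        subquotient (idealOf K G) (idealOf K H)) ≠ 0 := by
      rw [Ne, Submodule.Quotient.mk_eq_zero, Submodule.mem_comap]
      exact fun h => hvG (monomial_mem_idealOf.1 h)
    rw [← smul_eq_zero_iff_mem_of_linearEquiv ψ hx f, ← Submodule.Quotient.mk_smul,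
      Submodule.Quotient.mk_eq_zero, Submodule.mem_comap]
    rfl

end Extraction

section PrettyClean

variable {n : ℕ} {K : Type*} [Field K] {G : Set (Mon n)}

theorem IsVarColon.mul_monomial_mem_iff {v : Mon n} {s : Set (Fin n)} (h : IsVarColon G v s)
    (f : MvPolynomial (Fin n) K) : f * monomial v 1 ∈ idealOf K G ↔ f ∈ varIdeal K s := by
  have hsupp : (f * monomial v 1).support = f.support.map (addRightEmbedding v) :=
    AddMonoidAlgebra.support_coeff_mul_single f 1 (by simp) v
  rw [mem_idealOf, varIdeal, mem_ideal_span_X_image, hsupp]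
  simp only [Finset.mem_map, addRightEmbedding_apply, forall_exists_index, and_imp,
    forall_apply_eq_imp_iff₂]
  exact forall₂_congr fun u _ => h u

theorem prettyClean_of_isPrimeFiltration {L : List (Mon n × Set (Fin n))}
    (h : IsPrimeFiltration G L {0}) (hL : PrettyOrdered L) : PrettyClean (idealOf K G) := by
  have hsucc : ∀ k (hk : k < L.length), idealOf K (insertSteps G (L.take (k + 1))) =
      idealOf K (insertSteps G (L.take k)) ⊔ Ideal.span {monomial L[k].1 1} := fun k hk => by
    rw [insertSteps_take_succ L G k hk, idealOf_insert]
  refine ⟨L.length, fun k => idealOf K (insertSteps G (L.take k)),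
    fun k => varIdeal K L[(k : ℕ)].2, by simp [insertSteps], ?_, fun k => ⟨_, rfl⟩, fun k => ?_,
    fun k => ⟨varIdeal_isPrime _, _, rfl⟩, fun k => ?_, fun i j hij hle => ?_⟩
  · show idealOf K (insertSteps G (L.take L.length)) = ⊤
    rw [List.take_length, idealOf_eq_idealOf_iff.2 h.upperClosure_insertSteps,
      idealOf_singleton_zero]
  · show _ ≤ idealOf K (insertSteps G (L.take (k + 1)))
    exact hsucc k k.2 ▸ le_sup_left
  · have := nonempty_linearEquiv_of_colon
      ((h.isVarColon_getElem k k.2).mul_monomial_mem_iff (K := K))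
    rwa [← hsucc k k.2] at this
  · have hss := varIdeal_le_varIdeal_iff.1 hle
    by_contra hne
    exact List.pairwise_iff_getElem.1 hL i j i.2 j.2 hij
      (hss.ssubset_of_ne fun h => hne (congrArg (varIdeal K) h))

theorem isPrimeFiltration_ofFn : ∀ {r : ℕ} {G : Set (Mon n)}
    (c : Fin (r + 1) → Ideal (MvPolynomial (Fin n) K)) (v : Fin r → Mon n)
    (s : Fin r → Set (Fin n)), c 0 = idealOf K G → c (Fin.last r) = ⊤ →
    (∀ k, c k.succ = c k.castSucc ⊔ Ideal.span {monomial (v k) 1}) →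
    (∀ k u, monomial (u + v k) 1 ∈ c k.castSucc ↔ ∃ i ∈ s k, u i ≠ 0) →
    IsPrimeFiltration G (List.ofFn fun k => (v k, s k)) {0}
  | 0, G, c, _, _, h0, hlast, _, _ => by
    rw [List.ofFn_zero, IsPrimeFiltration, ← idealOf_eq_idealOf_iff (K := K),
      idealOf_singleton_zero, ← h0]
    exact hlast
  | r + 1, G, c, v, s, h0, hlast, hsucc, hcol => by
    rw [List.ofFn_succ]
    refine ⟨fun u => by rw [← monomial_mem_idealOf (K := K), ← h0]; exact hcol 0 u, ?_⟩
    exact isPrimeFiltration_ofFn (fun k => c k.succ) (fun k => v k.succ) (fun k => s k.succ)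
      (by rw [idealOf_insert, ← h0]; exact hsucc 0) hlast (fun k => hsucc k.succ)
      fun k => hcol k.succ

theorem exists_isPrimeFiltration_of_prettyClean (h : PrettyClean (idealOf K G)) :
    ∃ L, IsPrimeFiltration G L {0} ∧ PrettyOrdered L := by
  obtain ⟨r, c, P, hc0, htop, hmono, hle, hP, hiso, hord⟩ := h
  choose Gs hGs using hmono
  choose s hs using fun k => (hP k).2
  have hstep : ∀ k : Fin r, ∃ v, c k.succ = c k.castSucc ⊔ Ideal.span {monomial v 1} ∧
      ∀ u, monomial (u + v) 1 ∈ c k.castSucc ↔ ∃ i ∈ s k, u i ≠ 0 := fun k => by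
    have := (hP k).1
    have hlek := hle k
    have hisok := hiso k
    rw [hGs k.succ, hGs k.castSucc] at hisok hlek ⊢
    obtain ⟨v, hv, hcol⟩ := exists_eq_sup_monomial_of_linearEquiv hlek hisok
    refine ⟨v, hv, fun u => ?_⟩
    rw [← one_mul (1 : K), ← monomial_mul, hcol, hs, ← varIdeal, monomial_mem_varIdeal]
  choose v hv hcol using hstep
  refine ⟨_, isPrimeFiltration_ofFn c v s hc0 htop hv hcol,
    List.pairwise_ofFn.2 fun i j hij hss => ?_⟩
  have hPij := hord i j hij (by rw [hs, hs]; exact varIdeal_le_varIdeal_iff.2 hss.1)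
  rw [hs, hs] at hPij
  exact hss.2 (varIdeal_le_varIdeal_iff.1 hPij.ge)

end PrettyClean

theorem Fin.range_eq_insert_last {α : Type*} {m : ℕ} (hm : 0 < m) (g : Fin m → α) :
    Set.range g = insert (g ⟨m - 1, Nat.sub_lt hm Nat.one_pos⟩)
      {u | ∃ i : Fin m, (i : ℕ) < m - 1 ∧ u = g i} := by
  ext u
  constructor
  · rintro ⟨i, rfl⟩
    by_cases hi : (i : ℕ) < m - 1
    · exact Or.inr ⟨i, hi, rfl⟩
    · exact Or.inl (congrArg g (Fin.ext (by have := i.2; simp; omega)))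
  · rintro (rfl | ⟨i, -, rfl⟩)
    exacts [⟨_, rfl⟩, ⟨i, rfl⟩]

theorem prettyClean_of_minors_general {n : ℕ} {K : Type*} [Field K] (m : ℕ) (hm : 0 < m)
    (g : Fin m → Mon n) (j : Fin n) (t : ℕ) (w : Mon n) (hw : w j = 0)
    (hlast : g ⟨m - 1, Nat.sub_lt hm Nat.one_pos⟩ = w + Finsupp.single j t)
    (hfree : ∀ i : Fin m, (i : ℕ) < m - 1 → g i j = 0)
    (hJ : PrettyClean (idealOf K ({u | ∃ i : Fin m, (i : ℕ) < m - 1 ∧ u = g i} ∪ {w})))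
    (hK : PrettyClean (idealOf K {u | ∃ i : Fin m, (i : ℕ) < m - 1 ∧ u = g i})) :
    PrettyClean (idealOf K (Set.range g)) := by
  set GK := {u | ∃ i : Fin m, (i : ℕ) < m - 1 ∧ u = g i}
  have hGK : ∀ γ ∈ GK, γ j = 0 := by
    rintro _ ⟨i, hi, rfl⟩
    exact hfree i hi
  rw [Set.union_singleton] at hJ
  obtain ⟨LK, hLK, hLKo, hLKj⟩ :=
    exists_isPrimeFiltration_avoiding hGK (exists_isPrimeFiltration_of_prettyClean hK)
  obtain ⟨LJ, hLJ, hLJo, hLJj⟩ := exists_isPrimeFiltration_avoiding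
    (by rintro _ (rfl | hγ); exacts [hw, hGK _ hγ]) (exists_isPrimeFiltration_of_prettyClean hJ)
  obtain ⟨L, hL, hLo⟩ := exists_isPrimeFiltration_insert_add_single hGK hLK hLKo hLKj hLJ hLJo
    fun p hp => (hLJj p hp).2
  rw [Fin.range_eq_insert_last hm, hlast]
  exact prettyClean_of_isPrimeFiltration hL hLo

/-- Let `I` have minimal monomial generating set `{u_1,…,u_{m-1}, ū_m x_j^t}`, where
`x_j` is a free variable of `I` dividing only the last generator and `x_j ∤ ū_m`.
If the two minors `I_{(∅,{x_j})} = (u_1,…,u_{m-1}, ū_m)` and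
`I_{({x_j},∅)} = (u_1,…,u_{m-1})` define pretty clean quotient rings, then `S/I` is
pretty clean. -/
theorem prettyClean_of_minors {n : ℕ} {K : Type*} [Field K] (m : ℕ) (hm : 0 < m)
    (g : Fin m → Mon n) (j : Fin n) (t : ℕ) (ht : 0 < t) (w : Mon n) (hw : w j = 0)
    (hlast : g ⟨m - 1, Nat.sub_lt hm Nat.one_pos⟩ = w + Finsupp.single j t)
    (hfree : ∀ i : Fin m, (i : ℕ) < m - 1 → g i j = 0)
    (hmin : ∀ i i' : Fin m, g i ≤ g i' → i = i')
    (hJ : PrettyClean (idealOf K ({u | ∃ i : Fin m, (i : ℕ) < m - 1 ∧ u = g i} ∪ {w})))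
    (hK : PrettyClean (idealOf K {u | ∃ i : Fin m, (i : ℕ) < m - 1 ∧ u = g i})) :
    PrettyClean (idealOf K (Set.range g)) :=
  prettyClean_of_minors_general m hm g j t w hw hlast hfree hJ hK
end
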